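/- arXiv:2412.08552 — 10 statements merged into one kernel-verified Lean document; each statement's English description precedes it below -/
import Mathlib

section
/- Let a, b > 1 be real numbers and let p, q be complex numbers with Re(p) > 0, Re(q) > 0 such that the ratio q/p is a positive real number. For y ≥ 0 let j(y) denote the number of positive integers n satisfying (n+a)(n+b)^{q/p} ≤ e^y. Then for every complex z with |z| < 1, the generalized polylogarithm satisfies Φ_{p,q}(a,b;z) = (1+a)^p (1+b)^q ( z/(1−z) + (p z/(z−1)) ∫_0^∞ e^{−p y} z^{j(y)} dy ). -/
open MeasureTheory

/-- The generalized polylogarithm `Φ_{p,q}(a,b;z) = Σ_{k=1}^∞ (1+a)^p (1+b)^q z^k / ((k+a)^p (k+b)^q)`. -/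
noncomputable def genPolylog (p q : ℂ) (a b : ℝ) (z : ℂ) : ℂ :=
  ∑' k : ℕ, (((1 + a : ℝ) : ℂ) ^ p * ((1 + b : ℝ) : ℂ) ^ q /
      ((((k : ℝ) + 1 + a : ℝ) : ℂ) ^ p * (((k : ℝ) + 1 + b : ℝ) : ℂ) ^ q)) * z ^ (k + 1)

/-- `j y` counts the positive integers `n` with `(n+a)(n+b)^{q/p} ≤ e^y`. -/
noncomputable def jCount (p q : ℂ) (a b : ℝ) (y : ℝ) : ℕ :=
  Set.ncard {n : ℕ | 0 < n ∧ ((n : ℝ) + a) * ((n : ℝ) + b) ^ ((q / p).re) ≤ Real.exp y}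

/-!
Since `q = r p` with `r = q/p` real, `(k+a)^p (k+b)^q = Δ(k)^p` with `Δ(k) = (k+a)(k+b)^r`, so the
series is `Σ_k e^{-p ℓ_k} z^k` with `ℓ_k = log Δ(k) ≥ 0`. Writing
`e^{-p ℓ_k} = p ∫_{ℓ_k}^∞ e^{-p y} dy` and exchanging sum and integral (absolutely convergent for
`|z| < 1`) gives `p ∫_0^∞ e^{-p y} Σ_{k : ℓ_k ≤ y} z^k dy`. The indices with `ℓ_k ≤ y` are exactly
`1, …, j(y)`, so the inner sum is the geometric sum `z (z^{j(y)} - 1) / (z - 1)`.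
-/

open Set Filter
open scoped Complex

theorem integral_Ioi_cexp_neg_mul {p : ℂ} (hp : 0 < p.re) (c : ℝ) :
    ∫ y in Ioi c, cexp (-(p * y)) = cexp (-(p * c)) / p := by
  simp_rw [← neg_mul]
  rw [integral_exp_mul_complex_Ioi (by simpa using hp) c, neg_div_neg_eq]

theorem integrableOn_Ioi_cexp_neg_mul {p : ℂ} (hp : 0 < p.re) (c : ℝ) :
    IntegrableOn (fun y : ℝ => cexp (-(p * y))) (Ioi c) := by
  simpa only [neg_mul] using integrableOn_exp_mul_complex_Ioi (a := -p) (by simpa using hp) c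

theorem le_ncard_setOf_pos_le_iff {f : ℕ → ℝ} (hf : Monotone f) (hf_top : Tendsto f atTop atTop)
    {t : ℝ} {n : ℕ} (hn : 0 < n) : n ≤ {m | 0 < m ∧ f m ≤ t}.ncard ↔ f n ≤ t := by
  constructor
  · intro h
    by_contra! ht
    have hsub : {m | 0 < m ∧ f m ≤ t} ⊆ Ioo 0 n := fun m hm =>
      ⟨hm.1, lt_of_not_ge fun hnm => (ht.trans_le (hf hnm)).not_ge hm.2⟩
    have := ncard_le_ncard hsub (finite_Ioo 0 n)
    simp only [ncard_Ioo_nat] at this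
    omega
  · intro ht
    obtain ⟨N, hN⟩ := eventually_atTop.1 (hf_top.eventually_gt_atTop t)
    have hfin : {m | 0 < m ∧ f m ≤ t}.Finite :=
      (finite_Iio N).subset fun m hm => lt_of_not_ge fun h => (hN m h).not_ge hm.2
    calc n = (Ioc 0 n).ncard := by simp
      _ ≤ _ := ncard_le_ncard
        (fun m hm => show 0 < m ∧ f m ≤ t from ⟨hm.1, (hf hm.2).trans ht⟩) hfin

theorem summable_integral_norm_indicator_Ici_cexp_neg_mul_pow (ℓ : ℕ → ℝ) {p z : ℂ}
    (hp : 0 < p.re) (hz : ‖z‖ < 1) :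
    Summable fun k => ∫ y in Ioi (0 : ℝ),
      ‖(Ici (ℓ (k + 1))).indicator (fun y : ℝ => cexp (-(p * y)) * z ^ (k + 1)) y‖ := by
  have hexp_int := integrableOn_Ioi_cexp_neg_mul hp 0
  refine .of_nonneg_of_le (fun k => integral_nonneg fun y => norm_nonneg _) (fun k => ?_)
    ((summable_geometric_of_lt_one (norm_nonneg z) hz).mul_left
      ((∫ y in Ioi (0 : ℝ), ‖cexp (-(p * y))‖) * ‖z‖))
  calc _ ≤ ∫ y in Ioi (0 : ℝ), ‖cexp (-(p * y))‖ * ‖z‖ ^ (k + 1) :=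
        integral_mono ((hexp_int.mul_const _).indicator measurableSet_Ici).norm
          (hexp_int.norm.mul_const _) fun y => by
            simpa only [norm_indicator_eq_indicator_norm, norm_mul, norm_pow] using
              indicator_le_self' (fun _ _ => by positivity) y
    _ = _ := by rw [integral_mul_const]; ring

section LaplaceRepresentation

variable {ℓ : ℕ → ℝ} {N : ℝ → ℕ}

theorem monotone_of_le_iff_le (hN : ∀ y n, 0 < n → (n ≤ N y ↔ ℓ n ≤ y)) : Monotone N := by
  intro y y' hyy'
  rcases Nat.eq_zero_or_pos (N y) with h0 | h0
  · omega
  · exact (hN y' _ h0).2 (((hN y _ h0).1 le_rfl).trans hyy')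

theorem tsum_indicator_Ici_eq_sum_range (hN : ∀ y n, 0 < n → (n ≤ N y ↔ ℓ n ≤ y))
    {E : Type*} [AddCommMonoid E] [TopologicalSpace E] (F : ℕ → ℝ → E) (y : ℝ) :
    ∑' k, (Ici (ℓ (k + 1))).indicator (F k) y = ∑ k ∈ Finset.range (N y), F k y := by
  have hmem (k : ℕ) : y ∈ Ici (ℓ (k + 1)) ↔ k < N y :=
    (hN y (k + 1) k.succ_pos).symm.trans Nat.succ_le_iff
  rw [tsum_eq_sum (s := Finset.range (N y)) fun k hk =>
    indicator_of_notMem (mt (hmem k).1 (by simpa using hk)) _]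
  exact Finset.sum_congr rfl fun k hk => indicator_of_mem ((hmem k).2 (by simpa using hk)) _

theorem integral_Ioi_indicator_Ici_cexp_neg_mul {p : ℂ} (hp : 0 < p.re) {c : ℝ} (hc : 0 ≤ c)
    (w : ℂ) :
    ∫ y in Ioi 0, (Ici c).indicator (fun y : ℝ => cexp (-(p * y)) * w) y =
      cexp (-(p * c)) / p * w := by
  rw [integral_congr_ae (ae_restrict_of_ae (indicator_ae_eq_of_ae_eq_set Ioi_ae_eq_Ici.symm)),
    integral_indicator measurableSet_Ioi, Measure.restrict_restrict measurableSet_Ioi,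
    inter_eq_self_of_subset_left (Ioi_subset_Ioi hc), integral_mul_const,
    integral_Ioi_cexp_neg_mul hp]

theorem tsum_cexp_neg_mul_pow_eq_integral (hN : ∀ y n, 0 < n → (n ≤ N y ↔ ℓ n ≤ y))
    (hℓ : ∀ n, 0 < n → 0 ≤ ℓ n) {p z : ℂ} (hp : 0 < p.re) (hz : ‖z‖ < 1) :
    ∑' k : ℕ, cexp (-(p * ℓ (k + 1))) * z ^ (k + 1) =
      z / (1 - z) + p * z / (z - 1) * ∫ y in Ioi (0 : ℝ), cexp (-(p * y)) * z ^ N y := by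
  set g : ℕ → ℝ → ℂ := fun k =>
    (Ici (ℓ (k + 1))).indicator fun y => cexp (-(p * y)) * z ^ (k + 1)
  have hp0 : p ≠ 0 := by rintro rfl; simp at hp
  have hz1 : z ≠ 1 := by rintro rfl; simp at hz
  have hexp_int := integrableOn_Ioi_cexp_neg_mul hp 0
  have hg_int (k : ℕ) : IntegrableOn (g k) (Ioi 0) :=
    (hexp_int.mul_const _).indicator measurableSet_Ici
  have hI_int : IntegrableOn (fun y : ℝ => cexp (-(p * y)) * z ^ N y) (Ioi 0) :=
    hexp_int.mul_bdd (c := 1)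
      (measurable_from_nat.comp (monotone_of_le_iff_le hN).measurable).aestronglyMeasurable
      (ae_of_all _ fun y => by simpa [norm_pow] using pow_le_one₀ (norm_nonneg z) hz.le)
  have hg_tsum (y : ℝ) :
      ∑' k, g k y = z / (z - 1) * (cexp (-(p * y)) * z ^ N y - cexp (-(p * y))) := by
    rw [tsum_indicator_Ici_eq_sum_range hN]
    simp_rw [pow_succ, ← mul_assoc, ← Finset.sum_mul, ← Finset.mul_sum, geom_sum_eq hz1]
    field_simp
  calc ∑' k : ℕ, cexp (-(p * ℓ (k + 1))) * z ^ (k + 1) = ∑' k, p * ∫ y in Ioi 0, g k y := by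
        congr 1; ext k
        rw [integral_Ioi_indicator_Ici_cexp_neg_mul hp (hℓ _ k.succ_pos)]
        field_simp
    _ = p * ∫ y in Ioi 0, ∑' k, g k y := by
        rw [tsum_mul_left, integral_tsum_of_summable_integral_norm hg_int
          (summable_integral_norm_indicator_Ici_cexp_neg_mul_pow ℓ hp hz)]
    _ = p * (z / (z - 1) * ((∫ y in Ioi (0 : ℝ), cexp (-(p * y)) * z ^ N y) - 1 / p)) := by
        simp_rw [hg_tsum]
        rw [integral_const_mul, integral_sub hI_int hexp_int, integral_Ioi_cexp_neg_mul hp]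
        simp
    _ = _ := by
        field_simp
        ring

end LaplaceRepresentation

theorem cpow_mul_cpow_mul_ofReal {x w : ℝ} (hx : 0 < x) (hw : 0 < w) (p : ℂ) (r : ℝ) :
    (x : ℂ) ^ p * (w : ℂ) ^ (p * r) = cexp (p * Real.log (x * w ^ r)) := by
  rw [Complex.cpow_def_of_ne_zero (by exact_mod_cast hx.ne'),
    Complex.cpow_def_of_ne_zero (by exact_mod_cast hw.ne'), ← Complex.exp_add,
    Real.log_mul hx.ne' (Real.rpow_pos_of_pos hw r).ne', Real.log_rpow hw,
    ← Complex.ofReal_log hx.le, ← Complex.ofReal_log hw.le]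
  congr 1
  push_cast
  ring

theorem le_add_mul_add_rpow {x a b r : ℝ} (hx : 1 ≤ x) (ha : 0 ≤ a) (hb : 0 ≤ b) (hr : 0 ≤ r) :
    x ≤ (x + a) * (x + b) ^ r :=
  calc x ≤ x + a := by linarith
    _ ≤ (x + a) * (x + b) ^ r :=
      le_mul_of_one_le_right (by linarith) (Real.one_le_rpow (by linarith) hr)

theorem le_jCount_iff {p q : ℂ} {a b : ℝ} (ha : 0 ≤ a) (hb : 0 ≤ b) (hr : 0 ≤ (q / p).re)
    {y : ℝ} {n : ℕ} (hn : 0 < n) :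
    n ≤ jCount p q a b y ↔ Real.log (((n : ℝ) + a) * ((n : ℝ) + b) ^ (q / p).re) ≤ y := by
  have hmono : Monotone fun m : ℕ => ((m : ℝ) + a) * ((m : ℝ) + b) ^ (q / p).re :=
    Monotone.mul (fun m m' h => by gcongr) (fun m m' h => by gcongr)
      (fun m => by positivity) (fun m => by positivity)
  have htop : Tendsto (fun m : ℕ => ((m : ℝ) + a) * ((m : ℝ) + b) ^ (q / p).re) atTop atTop :=
    tendsto_atTop_mono' atTop ((eventually_ge_atTop 1).mono fun m hm =>
      le_add_mul_add_rpow (by exact_mod_cast hm) ha hb hr) tendsto_natCast_atTop_atTop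
  rw [Real.log_le_iff_le_exp (by positivity)]
  exact le_ncard_setOf_pos_le_iff hmono htop hn

theorem generalized_polylog_single_integral_general
    (a b : ℝ) (ha : 1 < a) (hb : 1 < b)
    (p q : ℂ) (hp : 0 < p.re)
    (hratio_re : 0 < (q / p).re) (hratio_im : (q / p).im = 0)
    (z : ℂ) (hz : ‖z‖ < 1) :
    genPolylog p q a b z =
      ((1 + a : ℝ) : ℂ) ^ p * ((1 + b : ℝ) : ℂ) ^ q *
        (z / (1 - z) +
          (p * z / (z - 1)) *
            ∫ y in Set.Ioi (0 : ℝ), Complex.exp (-(p * (y : ℂ))) * z ^ (jCount p q a b y)) := by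
  set r := (q / p).re with hr
  have hq : q = p * r := by
    have hp0 : p ≠ 0 := by rintro rfl; simp at hp
    rw [mul_comm, ← div_eq_iff hp0]
    exact Complex.ext rfl (by simpa using hratio_im)
  have hlog_nonneg (n : ℕ) (hn : 0 < n) : 0 ≤ Real.log (((n : ℝ) + a) * ((n : ℝ) + b) ^ r) :=
    Real.log_nonneg ((Nat.one_le_cast.2 hn).trans
      (le_add_mul_add_rpow (Nat.one_le_cast.2 hn) (by linarith) (by linarith) hratio_re.le))
  have hdenom (k : ℕ) : (((k : ℝ) + 1 + a : ℝ) : ℂ) ^ p * (((k : ℝ) + 1 + b : ℝ) : ℂ) ^ q =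
      cexp (p * Real.log ((((k + 1 : ℕ) : ℝ) + a) * (((k + 1 : ℕ) : ℝ) + b) ^ r)) := by
    rw [hq, cpow_mul_cpow_mul_ofReal (by positivity) (by positivity), Nat.cast_succ]
  rw [← tsum_cexp_neg_mul_pow_eq_integral
      (fun y n hn => le_jCount_iff (by linarith) (by linarith) hratio_re.le hn) hlog_nonneg hp hz,
    genPolylog, ← tsum_mul_left, ← hr]
  congr 1
  ext k
  rw [hdenom, Complex.exp_neg, div_eq_mul_inv]
  ring

theorem generalized_polylog_single_integral
    (a b : ℝ) (ha : 1 < a) (hb : 1 < b)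
    (p q : ℂ) (hp : 0 < p.re) (hq : 0 < q.re)
    (hratio_re : 0 < (q / p).re) (hratio_im : (q / p).im = 0)
    (z : ℂ) (hz : ‖z‖ < 1) :
    genPolylog p q a b z =
      ((1 + a : ℝ) : ℂ) ^ p * ((1 + b : ℝ) : ℂ) ^ q *
        (z / (1 - z) +
          (p * z / (z - 1)) *
            ∫ y in Set.Ioi (0 : ℝ), Complex.exp (-(p * (y : ℂ))) * z ^ (jCount p q a b y)) :=
  generalized_polylog_single_integral_general a b ha hb p q hp hratio_re hratio_im z hz
end

section
/- Let a, b > 1 be real numbers and let p be a complex number with Re(p) > 0. For y ≥ 0 let n(y) denote the number of positive integers n satisfying (n+a)(n+b) ≤ e^y, which equals max(⌊(−(a+b) + √((a−b)^2 + 4e^y))/2⌋, 0). Then for every complex z with |z| < 1, Φ_{p,p}(a,b;z) = (1+a)^p (1+b)^p ( z/(1−z) + (p z/(z−1)) ∫_0^∞ e^{−p y} z^{n(y)} dy ). -/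
open MeasureTheory

/-- `nCount y` is the number of positive integers `n` with `(n+a)(n+b) ≤ e^y`. -/
noncomputable def nCount (a b : ℝ) (y : ℝ) : ℕ :=
  Set.ncard {n : ℕ | 0 < n ∧ ((n : ℝ) + a) * ((n : ℝ) + b) ≤ Real.exp y}

/-!
On the interval `[y_n, y_{n+1})` with `y_n = log((n+a)(n+b))` (and `y_0 = 0`) the count `n(y)`
equals `n`, so the integral splits into the elementary pieces
`z^n (e^{-p y_n} - e^{-p y_{n+1}}) / p`. Summation by parts turns their sum into
`(1 + (z - 1) Σ_n z^n e^{-p y_{n+1}}) / p`, and `e^{-p y_{n+1}} = (n+1+a)^{-p} (n+1+b)^{-p}`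
is exactly the `n`-th coefficient of `Φ_{p,p}(a,b;z) / z`.
-/

open Set

theorem tsum_pow_mul_sub_succ {𝕜 : Type*} [NormedField 𝕜] [CompleteSpace 𝕜] {z : 𝕜}
    (hz : ‖z‖ < 1) {w : ℕ → 𝕜} {C : ℝ} (hw : ∀ n, ‖w n‖ ≤ C) :
    ∑' n, z ^ n * (w n - w (n + 1)) = w 0 + (z - 1) * ∑' n, z ^ n * w (n + 1) := by
  have summable_of_bdd : ∀ v : ℕ → 𝕜, (∀ n, ‖v n‖ ≤ C) → Summable fun n ↦ z ^ n * v n :=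
    fun v hv ↦ .of_norm_bounded ((summable_geometric_of_lt_one (norm_nonneg z) hz).mul_left C)
      fun n ↦ by rw [norm_mul, norm_pow, mul_comm]; gcongr; exact hv n
  have hA := summable_of_bdd w hw
  rw [funext fun n ↦ mul_sub (z ^ n) _ _,
    Summable.tsum_sub hA (summable_of_bdd _ fun n ↦ hw (n + 1)), hA.tsum_eq_zero_add]
  simp only [pow_succ', mul_assoc, tsum_mul_left]
  ring

theorem integral_Ioi_eq_tsum_integral_Ico {E : Type*} [NormedAddCommGroup E] [NormedSpace ℝ E]
    {Y : ℕ → ℝ} (hY : Monotone Y) (hY_unbdd : ¬BddAbove (range Y)) {g : ℝ → E}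
    (hg : IntegrableOn g (Ioi (Y 0))) :
    ∫ x in Ioi (Y 0), g x = ∑' n, ∫ x in Ico (Y n) (Y (n + 1)), g x := by
  have hUnion : ⋃ n, Ico (Y n) (Y (n + 1)) = Ici (Y 0) :=
    iUnion_Ico_map_succ_eq_Ici (fun n ↦ hY n.zero_le) hY_unbdd
  rw [← integral_Ici_eq_integral_Ioi, ← hUnion]
  exact integral_iUnion (fun _ ↦ measurableSet_Ico) hY.pairwise_disjoint_on_Ico_succ
    (by rw [hUnion]; exact (integrableOn_Ici_iff_integrableOn_Ioi).2 hg)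

theorem integral_cexp_neg_mul {p : ℂ} (hp : p ≠ 0) (s t : ℝ) :
    ∫ y in s..t, Complex.exp (-(p * y)) =
      (Complex.exp (-(p * s)) - Complex.exp (-(p * t))) / p := by
  simp only [← neg_mul, integral_exp_mul_complex (neg_ne_zero.mpr hp), div_neg, neg_div', neg_sub]

theorem ncard_setOf_pos_and_le (N : ℕ) : {m : ℕ | 0 < m ∧ m ≤ N}.ncard = N := by
  rw [show {m : ℕ | 0 < m ∧ m ≤ N} = Icc 1 N by ext; simp [Nat.one_le_iff_ne_zero, pos_iff_ne_zero],
    ncard_Icc_nat]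
  omega

/-- The point where `nCount a b` jumps to `n`; the value at `0` is a convention, so that the
intervals `[nCountJump a b n, nCountJump a b (n + 1))` tile `[0, ∞)`. -/
noncomputable def nCountJump (a b : ℝ) : ℕ → ℝ
  | 0 => 0
  | n + 1 => Real.log (((n : ℝ) + 1 + a) * ((n : ℝ) + 1 + b))

section

variable {a b : ℝ}

theorem nCount_eq_toNat_floor (hab : -2 ≤ a + b) (t : ℝ) :
    nCount a b t = (⌊(-(a + b) + Real.sqrt ((a - b) ^ 2 + 4 * Real.exp t)) / 2⌋).toNat := by
  set r := (-(a + b) + Real.sqrt ((a - b) ^ 2 + 4 * Real.exp t)) / 2 with hr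
  -- `(2m + a + b)^2 = (a - b)^2 + 4 (m + a)(m + b)`, and `2m + a + b ≥ 0` for `m ≥ 1`
  have le_exp_iff : ∀ m : ℕ, 0 < m →
      (((m : ℝ) + a) * ((m : ℝ) + b) ≤ Real.exp t ↔ (m : ℝ) ≤ r) := by
    intro m hm
    have hm1 : (1 : ℝ) ≤ m := by exact_mod_cast hm
    have hsq :
        (m : ℝ) ≤ r ↔ 2 * (m : ℝ) + (a + b) ≤ Real.sqrt ((a - b) ^ 2 + 4 * Real.exp t) := by
      rw [hr]; constructor <;> intro h <;> linarith
    rw [hsq, Real.le_sqrt (by linarith) (by positivity)]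
    constructor <;> intro h <;> nlinarith
  have hset : {m : ℕ | 0 < m ∧ ((m : ℝ) + a) * ((m : ℝ) + b) ≤ Real.exp t} =
      {m : ℕ | 0 < m ∧ m ≤ ⌊r⌋.toNat} := by
    ext m
    simp only [mem_ofPred_eq, and_congr_right_iff]
    intro hm
    rw [le_exp_iff m hm, Int.floor_toNat, Nat.le_floor_iff' hm.ne']
  rw [nCount, hset, ncard_setOf_pos_and_le]

theorem nCountJump_monotone (ha : 0 ≤ a) (hb : 0 ≤ b) : Monotone (nCountJump a b) := by
  refine monotone_nat_of_le_succ fun n ↦ ?_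
  cases n with
  | zero => exact Real.log_nonneg (by nlinarith)
  | succ m =>
    simp only [nCountJump]
    gcongr <;> omega

theorem nCountJump_le_iff (ha : 0 ≤ a) (hb : 0 ≤ b) {m : ℕ} (hm : 0 < m) (t : ℝ) :
    nCountJump a b m ≤ t ↔ ((m : ℝ) + a) * ((m : ℝ) + b) ≤ Real.exp t := by
  obtain ⟨k, rfl⟩ := Nat.exists_eq_add_one_of_ne_zero hm.ne'
  rw [nCountJump, Real.log_le_iff_le_exp (by positivity), Nat.cast_add_one]

theorem nCount_eq_of_mem_Ico (ha : 0 ≤ a) (hb : 0 ≤ b) {n : ℕ} {t : ℝ}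
    (ht : t ∈ Ico (nCountJump a b n) (nCountJump a b (n + 1))) : nCount a b t = n := by
  have hmono := nCountJump_monotone ha hb
  have hset : {m : ℕ | 0 < m ∧ ((m : ℝ) + a) * ((m : ℝ) + b) ≤ Real.exp t} =
      {m : ℕ | 0 < m ∧ m ≤ n} := by
    ext m
    simp only [mem_ofPred_eq, and_congr_right_iff]
    intro hm
    rw [← nCountJump_le_iff ha hb hm]
    refine ⟨fun h ↦ ?_, fun h ↦ (hmono h).trans ht.1⟩
    by_contra! hnm
    exact (ht.2.trans_le (hmono hnm)).not_ge h
  rw [nCount, hset, ncard_setOf_pos_and_le]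

theorem not_bddAbove_range_nCountJump (ha : 0 ≤ a) (hb : 0 ≤ b) :
    ¬BddAbove (range (nCountJump a b)) := by
  rintro ⟨M, hM⟩
  obtain ⟨n, hn⟩ := exists_nat_gt (Real.exp M)
  have h := (nCountJump_le_iff ha hb n.succ_pos M).mp (hM ⟨n + 1, rfl⟩)
  push_cast at h
  nlinarith

theorem cexp_neg_mul_nCountJump_succ (ha : 0 ≤ a) (hb : 0 ≤ b) (p : ℂ) (k : ℕ) :
    Complex.exp (-(p * nCountJump a b (k + 1))) =
      ((((k : ℝ) + 1 + a : ℝ) : ℂ) ^ p * (((k : ℝ) + 1 + b : ℝ) : ℂ) ^ p)⁻¹ := by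
  have hx : 0 < (k : ℝ) + 1 + a := by positivity
  have hy : 0 < (k : ℝ) + 1 + b := by positivity
  rw [nCountJump, Complex.ofReal_log (mul_pos hx hy).le,
    ← Complex.mul_cpow_ofReal_nonneg hx.le hy.le, ← Complex.cpow_neg,
    Complex.cpow_def_of_ne_zero (by exact_mod_cast (mul_pos hx hy).ne'),
    Complex.ofReal_mul, mul_comm]
  ring_nf

theorem genPolylog_eq_mul_tsum (ha : 0 ≤ a) (hb : 0 ≤ b) (p z : ℂ) :
    genPolylog p p a b z = ((1 + a : ℝ) : ℂ) ^ p * ((1 + b : ℝ) : ℂ) ^ p *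
      (z * ∑' n : ℕ, z ^ n * Complex.exp (-(p * nCountJump a b (n + 1)))) := by
  rw [genPolylog, ← tsum_mul_left, ← tsum_mul_left]
  refine tsum_congr fun k ↦ ?_
  rw [cexp_neg_mul_nCountJump_succ ha hb]
  ring

theorem measurable_nCount (hab : -2 ≤ a + b) : Measurable (nCount a b) := by
  rw [funext (nCount_eq_toNat_floor hab)]
  fun_prop

theorem integral_cexp_neg_mul_mul_pow_nCount (ha : 0 ≤ a) (hb : 0 ≤ b) {p : ℂ} (hp : 0 < p.re)
    {z : ℂ} (hz : ‖z‖ < 1) :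
    ∫ y in Ioi (0 : ℝ), Complex.exp (-(p * y)) * z ^ nCount a b y =
      (1 + (z - 1) * ∑' n : ℕ, z ^ n * Complex.exp (-(p * nCountJump a b (n + 1)))) / p := by
  have hp0 : p ≠ 0 := fun h ↦ by simp [h] at hp
  have hmono := nCountJump_monotone ha hb
  have norm_cexp : ∀ y : ℝ, ‖Complex.exp (-(p * y))‖ = Real.exp (-p.re * y) := fun y ↦ by
    simp [Complex.norm_exp, Complex.mul_re]
  have hpiece : ∀ n : ℕ, ∫ y in Ico (nCountJump a b n) (nCountJump a b (n + 1)),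
      Complex.exp (-(p * y)) * z ^ nCount a b y =
        z ^ n * (Complex.exp (-(p * nCountJump a b n)) -
          Complex.exp (-(p * nCountJump a b (n + 1)))) / p := fun n ↦ by
    rw [setIntegral_congr_fun measurableSet_Ico fun t ht ↦ by rw [nCount_eq_of_mem_Ico ha hb ht],
      integral_mul_const, integral_Ico_eq_integral_Ioc,
      ← intervalIntegral.integral_of_le (hmono n.le_succ), integral_cexp_neg_mul hp0]
    ring
  have hint : IntegrableOn (fun y : ℝ ↦ Complex.exp (-(p * y)) * z ^ nCount a b y)
      (Ioi (nCountJump a b 0)) := by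
    have := measurable_nCount (a := a) (b := b) (by linarith)
    refine Integrable.mono' (exp_neg_integrableOn_Ioi 0 hp)
      (by fun_prop : Measurable _).aestronglyMeasurable.restrict (ae_of_all _ fun y ↦ ?_)
    rw [norm_mul, norm_pow, norm_cexp]
    exact mul_le_of_le_one_right (Real.exp_nonneg _) (pow_le_one₀ (norm_nonneg z) hz.le)
  have hw : ∀ n, ‖Complex.exp (-(p * nCountJump a b n))‖ ≤ 1 := fun n ↦ by
    rw [norm_cexp, Real.exp_le_one_iff, neg_mul, neg_nonpos]
    exact mul_nonneg hp.le (hmono n.zero_le)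
  calc ∫ y in Ioi (0 : ℝ), Complex.exp (-(p * y)) * z ^ nCount a b y
      = ∫ y in Ioi (nCountJump a b 0), Complex.exp (-(p * y)) * z ^ nCount a b y := rfl
    _ = _ := by
      rw [integral_Ioi_eq_tsum_integral_Ico hmono (not_bddAbove_range_nCountJump ha hb) hint,
        tsum_congr hpiece, tsum_div_const, tsum_pow_mul_sub_succ hz hw]
      simp [nCountJump]

end

theorem generalized_polylog_single_integral_p_eq_q
    (a b : ℝ) (ha : 1 < a) (hb : 1 < b)
    (p : ℂ) (hp : 0 < p.re) :
    (∀ y : ℝ, 0 ≤ y →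
        nCount a b y =
          (⌊(-(a + b) + Real.sqrt ((a - b) ^ 2 + 4 * Real.exp y)) / 2⌋).toNat) ∧
    ∀ z : ℂ, ‖z‖ < 1 →
      genPolylog p p a b z =
        ((1 + a : ℝ) : ℂ) ^ p * ((1 + b : ℝ) : ℂ) ^ p *
          (z / (1 - z) +
            (p * z / (z - 1)) *
              ∫ y in Set.Ioi (0 : ℝ), Complex.exp (-(p * (y : ℂ))) * z ^ (nCount a b y)) := by
  refine ⟨fun y _ ↦ nCount_eq_toNat_floor (by linarith) y, fun z hz ↦ ?_⟩
  have hp0 : p ≠ 0 := fun h ↦ by simp [h] at hp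
  have hz1 : z - 1 ≠ 0 := fun h ↦ by simp [sub_eq_zero.mp h] at hz
  have ha0 : 0 ≤ a := by linarith
  have hb0 : 0 ≤ b := by linarith
  rw [genPolylog_eq_mul_tsum ha0 hb0, integral_cexp_neg_mul_mul_pow_nCount ha0 hb0 hp hz,
    ← neg_sub z 1]
  field_simp
  ring
end

section
/- Let a > 1 be a real number and let p be a complex number with Re(p) > 0. For τ ≥ 0 let m(τ) denote the number of positive integers n with n + a ≤ e^τ, i.e. m(τ) = max(⌊e^τ − a⌋, 0). Then for every complex z with |z| < 1, the Lerch transcendent satisfies Σ_{n=0}^∞ z^n/(n+a)^p = 1/a^p + z/(1−z) + (p z/(z−1)) ∫_0^∞ e^{−p τ} z^{m(τ)} dτ. -/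
open MeasureTheory

/-- `mCount a τ` is the number of positive integers `n` with `n + a ≤ e^τ`. -/
noncomputable def mCount (a : ℝ) (τ : ℝ) : ℕ :=
  Set.ncard {n : ℕ | 0 < n ∧ (n : ℝ) + a ≤ Real.exp τ}

/-!
For `x ≥ 1` and `Re p > 0` one has `x^(-p) = p ∫_{log x}^∞ e^(-pτ) dτ`. Multiplying by `c n` and
summing, with the interchange justified by absolute convergence, writes `∑ c n / (x n)^p` as `p`
times the Laplace transform of the summatory function `τ ↦ ∑_{x n ≤ e^τ} c n`. For the tail
`∑_{n ≥ 1} z^n / (n + a)^p` this summatory function is the geometric sum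
`z + ⋯ + z^m(τ) = z (z^m(τ) - 1) / (z - 1)`, and its constant part `-z / (z - 1)` integrates
against `p e^(-pτ)` to `z / (1 - z)`.
-/

open Set
open scoped Complex

lemma mCount_eq_toNat_floor (a τ : ℝ) : mCount a τ = (⌊Real.exp τ - a⌋).toNat := by
  have hset :
      {n : ℕ | 0 < n ∧ (n : ℝ) + a ≤ Real.exp τ} = Icc 1 (⌊Real.exp τ - a⌋).toNat := by
    ext n
    have : (n : ℤ) ≤ ⌊Real.exp τ - a⌋ ↔ (n : ℝ) + a ≤ Real.exp τ := by
      rw [Int.le_floor, Int.cast_natCast, le_sub_iff_add_le]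
    simp only [mem_ofPred_eq, mem_Icc, ← this]
    omega
  rw [mCount, hset, ← Finset.coe_Icc, ncard_coe_finset, Nat.card_Icc, Nat.add_sub_cancel]

lemma measurable_mCount (a : ℝ) : Measurable (mCount a) := by
  simp_rw [funext (mCount_eq_toNat_floor a)]
  exact (Measurable.of_discrete (f := Int.toNat)).comp
    (Int.measurable_floor.comp (Real.measurable_exp.sub measurable_const))

lemma lt_mCount_iff {a : ℝ} (ha : -1 < a) (τ : ℝ) (n : ℕ) :
    n < mCount a τ ↔ Real.log ((n + 1 : ℕ) + a) ≤ τ := by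
  rw [mCount_eq_toNat_floor, Int.lt_toNat, Int.lt_iff_add_one_le, Int.le_floor,
    Real.log_le_iff_le_exp (by push_cast; linarith [n.cast_nonneg (α := ℝ)]), le_sub_iff_add_le]
  norm_cast

lemma integrableOn_Ici_cexp_neg_mul {p : ℂ} (hp : 0 < p.re) (T : ℝ) :
    IntegrableOn (fun τ : ℝ => cexp (-(p * τ))) (Ici T) := by
  simpa only [neg_mul] using Iff.mpr integrableOn_Ici_iff_integrableOn_Ioi
    (integrableOn_exp_mul_complex_Ioi (a := -p) (by simpa using hp) T)

lemma integral_Ici_cexp_neg_mul {p : ℂ} (hp : 0 < p.re) (T : ℝ) :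
    ∫ τ in Ici T, cexp (-(p * τ)) = cexp (-(p * T)) / p := by
  simp_rw [integral_Ici_eq_integral_Ioi, ← neg_mul,
    integral_exp_mul_complex_Ioi (a := -p) (by simpa using hp), neg_div_neg_eq]

lemma inv_cpow_eq_mul_integral_Ici_log {p : ℂ} (hp : 0 < p.re) {x : ℝ} (hx : 0 < x) :
    ((x : ℂ) ^ p)⁻¹ = p * ∫ τ in Ici (Real.log x), cexp (-(p * τ)) := by
  rw [integral_Ici_cexp_neg_mul hp, Complex.cpow_def_of_ne_zero (by exact_mod_cast hx.ne'),
    ← Complex.ofReal_log hx.le, mul_comm, Complex.exp_neg]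
  field_simp [Complex.ne_zero_of_re_pos hp]

theorem hasSum_div_cpow_eq_laplace_summatory {p : ℂ} (hp : 0 < p.re) {x : ℕ → ℝ}
    (hx : ∀ n, 1 ≤ x n) {c : ℕ → ℂ} (hc : Summable fun n => ‖c n‖) :
    HasSum (fun n => c n / (x n : ℂ) ^ p)
      (p * ∫ τ in Ici (0 : ℝ), cexp (-(p * τ)) *
        ∑' n, (Ici (Real.log (x n))).indicator (fun _ => c n) τ) := by
  set F : ℕ → ℝ → ℂ := fun n τ =>
    cexp (-(p * τ)) * (Ici (Real.log (x n))).indicator (fun _ => c n) τ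
  have hexp := integrableOn_Ici_cexp_neg_mul hp 0
  have hF_le : ∀ n τ, ‖F n τ‖ ≤ ‖c n‖ * ‖cexp (-(p * τ))‖ := fun n τ => by
    rw [norm_mul, mul_comm]
    exact mul_le_mul_of_nonneg_right (norm_indicator_le_norm_self _ _) (norm_nonneg _)
  have hF_int : ∀ n, IntegrableOn (F n) (Ici 0) := fun n =>
    hexp.mul_bdd (measurable_const.indicator measurableSet_Ici).aestronglyMeasurable
      (Filter.Eventually.of_forall fun _ => norm_indicator_le_norm_self _ _)
  have hF_sum : Summable fun n => ∫ τ in Ici 0, ‖F n τ‖ :=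
    Summable.of_nonneg_of_le (fun n => integral_nonneg fun τ => norm_nonneg _)
      (fun n => integral_mono (hF_int n).norm (hexp.norm.const_mul _) (hF_le n))
      (by simpa only [integral_const_mul] using hc.mul_right _)
  have hF_integral : ∀ n, p * ∫ τ in Ici 0, F n τ = c n / (x n : ℂ) ^ p := fun n => by
    have hF : F n = (Ici (Real.log (x n))).indicator (fun τ => cexp (-(p * τ)) * c n) :=
      funext fun τ => (indicator_mul_right _ (fun τ : ℝ => cexp (-(p * τ))) _).symm
    rw [hF, setIntegral_indicator measurableSet_Ici, Ici_inter_Ici,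
      max_eq_right (Real.log_nonneg (hx n)), integral_mul_const, ← mul_assoc,
      ← inv_cpow_eq_mul_integral_Ici_log hp (by linarith [hx n]), div_eq_inv_mul]
  have := (hasSum_integral_of_summable_integral_norm hF_int hF_sum).mul_left p
  simpa only [hF_integral, F, tsum_mul_left] using this

lemma tsum_indicator_Ici_log_eq_sum_range_mCount {a : ℝ} (ha : -1 < a) (z : ℂ) (τ : ℝ) :
    ∑' n : ℕ, (Ici (Real.log ((n + 1 : ℕ) + a))).indicator (fun _ => z ^ (n + 1)) τ
      = ∑ n ∈ Finset.range (mCount a τ), z ^ (n + 1) := by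
  simp_rw [indicator_apply, mem_Ici, ← lt_mCount_iff ha]
  rw [tsum_eq_sum (s := Finset.range _) fun n hn => if_neg (by simpa using hn)]
  exact Finset.sum_congr rfl fun n hn => if_pos (Finset.mem_range.mp hn)

lemma integrableOn_Ici_cexp_neg_mul_pow_mCount {p : ℂ} (hp : 0 < p.re) (a : ℝ) {z : ℂ}
    (hz : ‖z‖ ≤ 1) (T : ℝ) :
    IntegrableOn (fun τ : ℝ => cexp (-(p * τ)) * z ^ mCount a τ) (Ici T) :=
  (integrableOn_Ici_cexp_neg_mul hp T).mul_bdd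
    (Measurable.of_discrete.comp (measurable_mCount a)).aestronglyMeasurable
    (Filter.Eventually.of_forall fun τ => by
      simpa only [norm_pow] using pow_le_one₀ (norm_nonneg z) hz)

theorem hasSum_lerch_tail {a : ℝ} (ha : 0 < a) {p : ℂ} (hp : 0 < p.re) {z : ℂ}
    (hz : ‖z‖ < 1) :
    HasSum (fun n : ℕ => z ^ (n + 1) / ((((n + 1 : ℕ) : ℝ) + a : ℝ) : ℂ) ^ p)
      (z / (1 - z) +
        p * z / (z - 1) * ∫ τ in Ioi (0 : ℝ), cexp (-(p * τ)) * z ^ mCount a τ) := by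
  have hz1 : z ≠ 1 := by rintro rfl; simp at hz
  have hgeom (m : ℕ) :
      ∑ n ∈ Finset.range m, z ^ (n + 1) = z / (z - 1) * z ^ m - z / (z - 1) := by
    simp_rw [pow_succ', ← Finset.mul_sum, geom_sum_eq hz1]
    ring
  have h := hasSum_div_cpow_eq_laplace_summatory hp (x := fun n => ((n + 1 : ℕ) : ℝ) + a)
    (fun n => by push_cast; linarith [n.cast_nonneg (α := ℝ)]) (c := fun n => z ^ (n + 1))
    ((summable_nat_add_iff 1).mpr (summable_norm_geometric_of_norm_lt_one hz))
  simp_rw [tsum_indicator_Ici_log_eq_sum_range_mCount (a := a) (by linarith) z, hgeom, mul_sub,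
    mul_left_comm (cexp _)] at h
  convert h using 1
  rw [integral_sub ((integrableOn_Ici_cexp_neg_mul_pow_mCount hp a hz.le 0).const_mul _)
      ((integrableOn_Ici_cexp_neg_mul hp 0).mul_const _), integral_const_mul, integral_mul_const,
    integral_Ici_cexp_neg_mul hp, integral_Ici_eq_integral_Ioi, Complex.ofReal_zero, mul_zero,
    neg_zero, Complex.exp_zero]
  field_simp [Complex.ne_zero_of_re_pos hp, sub_ne_zero.mpr hz1, sub_ne_zero.mpr hz1.symm]
  ring

theorem lerch_transcendent_integral_representation
    (a : ℝ) (ha : 1 < a) (p : ℂ) (hp : 0 < p.re) :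
    (∀ τ : ℝ, 0 ≤ τ → mCount a τ = (⌊Real.exp τ - a⌋).toNat) ∧
    ∀ z : ℂ, ‖z‖ < 1 →
      ∑' n : ℕ, z ^ n / (((n : ℝ) + a : ℝ) : ℂ) ^ p =
        1 / ((a : ℂ) ^ p) + z / (1 - z) +
          (p * z / (z - 1)) *
            ∫ τ in Set.Ioi (0 : ℝ), Complex.exp (-(p * (τ : ℂ))) * z ^ (mCount a τ) := by
  refine ⟨fun τ _ => mCount_eq_toNat_floor a τ, fun z hz => ?_⟩
  have h := (hasSum_lerch_tail (by linarith) hp hz).zero_add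
    (f := fun n : ℕ => z ^ n / (((n : ℝ) + a : ℝ) : ℂ) ^ p)
  rw [h.tsum_eq, add_assoc, pow_zero, Nat.cast_zero, zero_add]
end

section
/- Let p, q, a, b be real numbers with p, q > 0 and a, b > 1, and let x ∈ (0,1). Define ψ(p) = ( Φ_{p,q}(a,b;x) / ((1+a)^p (1+b)^q) − x/(1−x) ) · (x−1)/(p x). Then ψ is completely monotonic with respect to p on (0,∞); that is, ψ is infinitely differentiable on (0,∞) and (−1)^k ψ^{(k)}(p) ≥ 0 for every nonnegative integer k and every p > 0. -/
open Finset Real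

/-- The generalized polylogarithm with real parameters. -/
noncomputable def genPolylogR (p q a b x : ℝ) : ℝ :=
  ∑' k : ℕ, ((1 + a) ^ p * (1 + b) ^ q /
      (((k : ℝ) + 1 + a) ^ p * ((k : ℝ) + 1 + b) ^ q)) * x ^ (k + 1)

/-- The function `ψ(p)` built from the generalized polylogarithm. -/
noncomputable def psiFun (q a b x : ℝ) (p : ℝ) : ℝ :=
  (genPolylogR p q a b x / ((1 + a) ^ p * (1 + b) ^ q) - x / (1 - x)) * (x - 1) / (p * x)

/-- Closed form for the (signed) `k`-th derivative of `p ↦ (1 - A e^{-pα})/p`. -/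
noncomputable def Gaux (A α : ℝ) (k : ℕ) (p : ℝ) : ℝ :=
  (Nat.factorial k : ℝ) * (1 - A * Real.exp (-(p * α)) *
    ∑ j ∈ Finset.range (k + 1), (p * α) ^ j / (Nat.factorial j : ℝ)) / p ^ (k + 1)

/-- The (signed) `k`-th derivative of `ψ` written as a series. -/
noncomputable def auxT (q a b x : ℝ) (k : ℕ) (p : ℝ) : ℝ :=
  ∑' n : ℕ, ((1 - x) * x ^ n) * Gaux (((n : ℝ) + 1 + b) ^ (-q)) (Real.log ((n : ℝ) + 1 + a)) k p

lemma sum_exp_hasDerivAt (A α : ℝ) (k : ℕ) (p : ℝ) :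
    HasDerivAt (fun p : ℝ => A * Real.exp (-(p * α)) *
      ∑ j ∈ Finset.range (k + 1), (p * α) ^ j / (Nat.factorial j : ℝ))
      (-(A * α * Real.exp (-(p * α)) * (p * α) ^ k / (Nat.factorial k : ℝ))) p := by
  have hexp : HasDerivAt (fun p : ℝ => A * Real.exp (-(p * α)))
      (A * (Real.exp (-(p * α)) * -α)) p := by
    have h1 : HasDerivAt (fun p : ℝ => -(p * α)) (-α) p := by
      simpa using ((hasDerivAt_id p).mul_const α).fun_neg
    exact (h1.exp).const_mul A
  have hsum : HasDerivAt (fun p : ℝ => ∑ j ∈ Finset.range (k + 1), (p * α) ^ j / (Nat.factorial j : ℝ))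
      (α * ∑ j ∈ Finset.range k, (p * α) ^ j / (Nat.factorial j : ℝ)) p := by
    have h : ∀ j : ℕ, HasDerivAt (fun p : ℝ => (p * α) ^ j / (Nat.factorial j : ℝ))
        ((j : ℝ) * (p * α) ^ (j - 1) * α / (Nat.factorial j : ℝ)) p := by
      intro j
      simpa using (((hasDerivAt_id p).mul_const α).pow j).div_const (Nat.factorial j : ℝ)
    have := HasDerivAt.fun_sum (fun j _ => h j) (u := Finset.range (k + 1))
    refine this.congr_deriv ?_
    rw [Finset.sum_range_succ' (fun j => (j : ℝ) * (p * α) ^ (j - 1) * α / (Nat.factorial j : ℝ))]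
    simp only [Nat.cast_zero, zero_mul, zero_div, add_zero, Nat.succ_sub_one]
    rw [Finset.mul_sum]
    refine Finset.sum_congr rfl fun j _ => ?_
    rw [Nat.factorial_succ]
    push_cast
    field_simp
  have := hexp.fun_mul hsum
  refine this.congr_deriv ?_
  have hfact : ∑ j ∈ Finset.range (k + 1), (p * α) ^ j / (Nat.factorial j : ℝ)
      = (∑ j ∈ Finset.range k, (p * α) ^ j / (Nat.factorial j : ℝ))
        + (p * α) ^ k / (Nat.factorial k : ℝ) := by
    rw [Finset.sum_range_succ]
  rw [hfact]
  ring

lemma Gaux_hasDerivAt (A α : ℝ) (k : ℕ) (p : ℝ) (hp : p ≠ 0) :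
    HasDerivAt (Gaux A α k) (-(Gaux A α (k + 1) p)) p := by
  have hnum : HasDerivAt (fun p : ℝ => (Nat.factorial k : ℝ) * (1 - A * Real.exp (-(p * α)) *
      ∑ j ∈ Finset.range (k + 1), (p * α) ^ j / (Nat.factorial j : ℝ)))
      ((Nat.factorial k : ℝ) * (A * α * Real.exp (-(p * α)) * (p * α) ^ k / (Nat.factorial k : ℝ))) p := by
    have := ((sum_exp_hasDerivAt A α k p).const_sub 1).const_mul (Nat.factorial k : ℝ)
    refine this.congr_deriv ?_
    ring
  have hden : HasDerivAt (fun p : ℝ => p ^ (k + 1)) (((k : ℝ) + 1) * p ^ k) p := by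
    simpa using hasDerivAt_pow (k + 1) p
  have hne : p ^ (k + 1) ≠ 0 := pow_ne_zero _ hp
  have := hnum.fun_div hden hne
  have heq : Gaux A α k = fun p => ((Nat.factorial k : ℝ) * (1 - A * Real.exp (-(p * α)) *
      ∑ j ∈ Finset.range (k + 1), (p * α) ^ j / (Nat.factorial j : ℝ))) / p ^ (k + 1) := rfl
  rw [heq]
  refine this.congr_deriv ?_
  have hfact : ((Nat.factorial (k + 1) : ℝ)) = ((k : ℝ) + 1) * (Nat.factorial k : ℝ) := by
    rw [Nat.factorial_succ]; push_cast; ring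
  have hsum : ∑ j ∈ Finset.range (k + 2), (p * α) ^ j / (Nat.factorial j : ℝ)
      = (∑ j ∈ Finset.range (k + 1), (p * α) ^ j / (Nat.factorial j : ℝ))
        + (p * α) ^ (k + 1) / (Nat.factorial (k + 1) : ℝ) := Finset.sum_range_succ _ _
  simp only [Gaux, hsum, hfact]
  have hkfac : (Nat.factorial k : ℝ) ≠ 0 := Nat.cast_ne_zero.mpr (Nat.factorial_ne_zero k)
  field_simp
  ring

lemma Gaux_mem (A α : ℝ) (k : ℕ) (p : ℝ) (hp : 0 < p) (hA0 : 0 ≤ A) (hA1 : A ≤ 1)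
    (hα : 0 ≤ α) : 0 ≤ Gaux A α k p ∧ Gaux A α k p ≤ (Nat.factorial k : ℝ) / p ^ (k + 1) := by
  have hpa : 0 ≤ p * α := mul_nonneg hp.le hα
  have hSnn : 0 ≤ ∑ j ∈ Finset.range (k + 1), (p * α) ^ j / (Nat.factorial j : ℝ) :=
    Finset.sum_nonneg fun j _ => div_nonneg (pow_nonneg hpa j) (Nat.cast_nonneg _)
  have hS : ∑ j ∈ Finset.range (k + 1), (p * α) ^ j / (Nat.factorial j : ℝ) ≤ Real.exp (p * α) :=
    Real.sum_le_exp_of_nonneg hpa (k + 1)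
  have h1 : A * Real.exp (-(p * α)) *
      (∑ j ∈ Finset.range (k + 1), (p * α) ^ j / (Nat.factorial j : ℝ)) ≤ 1 := by
    calc A * Real.exp (-(p * α)) * (∑ j ∈ Finset.range (k + 1), (p * α) ^ j / (Nat.factorial j : ℝ))
        ≤ 1 * Real.exp (-(p * α)) * Real.exp (p * α) := by
          apply mul_le_mul
          · exact mul_le_mul hA1 le_rfl (Real.exp_nonneg _) zero_le_one
          · exact hS
          · exact hSnn
          · positivity
      _ = 1 := by rw [one_mul, ← Real.exp_add]; simp
  have h0 : 0 ≤ A * Real.exp (-(p * α)) *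
      (∑ j ∈ Finset.range (k + 1), (p * α) ^ j / (Nat.factorial j : ℝ)) := by positivity
  constructor
  · apply div_nonneg _ (pow_nonneg hp.le _)
    have : (0 : ℝ) ≤ 1 - A * Real.exp (-(p * α)) *
        ∑ j ∈ Finset.range (k + 1), (p * α) ^ j / (Nat.factorial j : ℝ) := by linarith
    positivity
  · rw [Gaux, div_le_div_iff₀ (by positivity) (by positivity)]
    have hf : (0 : ℝ) ≤ (Nat.factorial k : ℝ) := Nat.cast_nonneg _
    have hpk : (0 : ℝ) ≤ p ^ (k + 1) := by positivity
    nlinarith [mul_nonneg (mul_nonneg hf h0) hpk]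

section
variable {q a b x : ℝ}

lemma An_mem (hq : 0 < q) (hb : 1 < b) (n : ℕ) :
    0 ≤ ((n : ℝ) + 1 + b) ^ (-q) ∧ ((n : ℝ) + 1 + b) ^ (-q) ≤ 1 := by
  have hnb : (1 : ℝ) ≤ (n : ℝ) + 1 + b := by have := n.cast_nonneg (α := ℝ); linarith
  exact ⟨Real.rpow_nonneg (by linarith) _,
    Real.rpow_le_one_of_one_le_of_nonpos hnb (by linarith)⟩

lemma alphan_nonneg (ha : 1 < a) (n : ℕ) : 0 ≤ Real.log ((n : ℝ) + 1 + a) :=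
  Real.log_nonneg (by have := n.cast_nonneg (α := ℝ); linarith)

lemma term_mem (hq : 0 < q) (ha : 1 < a) (hb : 1 < b) (k : ℕ) (n : ℕ) (p : ℝ) (hp : 0 < p) :
    0 ≤ Gaux (((n : ℝ) + 1 + b) ^ (-q)) (Real.log ((n : ℝ) + 1 + a)) k p ∧
    Gaux (((n : ℝ) + 1 + b) ^ (-q)) (Real.log ((n : ℝ) + 1 + a)) k p
      ≤ (Nat.factorial k : ℝ) / p ^ (k + 1) :=
  Gaux_mem _ _ k p hp (An_mem hq hb n).1 (An_mem hq hb n).2 (alphan_nonneg ha n)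

lemma summable_T (hq : 0 < q) (ha : 1 < a) (hb : 1 < b) (hx0 : 0 < x) (hx1 : x < 1)
    (k : ℕ) (p : ℝ) (hp : 0 < p) :
    Summable (fun n : ℕ => ((1 - x) * x ^ n) *
      Gaux (((n : ℝ) + 1 + b) ^ (-q)) (Real.log ((n : ℝ) + 1 + a)) k p) := by
  have hc : ∀ n : ℕ, (0:ℝ) ≤ (1 - x) * x ^ n :=
    fun n => mul_nonneg (by linarith) (pow_nonneg hx0.le n)
  exact Summable.of_nonneg_of_le
    (fun n => mul_nonneg (hc n) (term_mem hq ha hb k n p hp).1)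
    (fun n => mul_le_mul_of_nonneg_left (term_mem hq ha hb k n p hp).2 (hc n))
    (((summable_geometric_of_lt_one hx0.le hx1).mul_left
      ((1 - x) * ((Nat.factorial k : ℝ) / p ^ (k + 1)))).congr (fun n => by ring))

lemma auxT_nonneg (hq : 0 < q) (ha : 1 < a) (hb : 1 < b) (hx0 : 0 < x) (hx1 : x < 1)
    (k : ℕ) (p : ℝ) (hp : 0 < p) : 0 ≤ auxT q a b x k p :=
  tsum_nonneg fun n => mul_nonneg (mul_nonneg (by linarith) (pow_nonneg hx0.le n))
    (term_mem hq ha hb k n p hp).1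

lemma auxT_hasDerivAt (hq : 0 < q) (ha : 1 < a) (hb : 1 < b) (hx0 : 0 < x) (hx1 : x < 1)
    (k : ℕ) (p : ℝ) (hp : 0 < p) :
    HasDerivAt (auxT q a b x k) (-(auxT q a b x (k + 1) p)) p := by
  have hp2 : 0 < p / 2 := by linarith
  have hder := hasDerivAt_tsum_of_isPreconnected
    (u := fun n : ℕ => ((1 - x) * x ^ n) * ((Nat.factorial (k + 1) : ℝ) / (p / 2) ^ (k + 2)))
    (t := Set.Ioi (p / 2))
    (g := fun n : ℕ => fun z : ℝ =>
      ((1 - x) * x ^ n) * Gaux (((n : ℝ) + 1 + b) ^ (-q)) (Real.log ((n : ℝ) + 1 + a)) k z)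
    (g' := fun n : ℕ => fun z : ℝ =>
      ((1 - x) * x ^ n) * -(Gaux (((n : ℝ) + 1 + b) ^ (-q)) (Real.log ((n : ℝ) + 1 + a)) (k + 1) z))
    (y₀ := p) (y := p)
    ?hu isOpen_Ioi (convex_Ioi _).isPreconnected ?hg ?hg' (by simpa using half_lt_self hp)
    ?hg0 (by simpa using half_lt_self hp)
  case hu =>
    exact ((summable_geometric_of_lt_one hx0.le hx1).mul_left
      ((1 - x) * ((Nat.factorial (k + 1) : ℝ) / (p / 2) ^ (k + 2)))).congr (fun n => by ring)
  case hg =>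
    intro n y hy
    have hy0 : y ≠ 0 := by have : p / 2 < y := hy; linarith
    exact (Gaux_hasDerivAt _ _ k y hy0).const_mul _
  case hg' =>
    intro n y hy
    have hy0 : 0 < y := lt_trans hp2 hy
    have hmem := term_mem hq ha hb (k + 1) n y hy0
    have hc : (0:ℝ) ≤ (1 - x) * x ^ n := mul_nonneg (by linarith) (pow_nonneg hx0.le n)
    rw [Real.norm_eq_abs, abs_mul, abs_neg, abs_of_nonneg hc, abs_of_nonneg hmem.1]
    apply mul_le_mul_of_nonneg_left _ hc
    refine hmem.2.trans ?_
    apply div_le_div_of_nonneg_left (Nat.cast_nonneg _) (by positivity)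
    exact pow_le_pow_left₀ hp2.le (le_of_lt hy) (k + 2)
  case hg0 =>
    exact summable_T hq ha hb hx0 hx1 k p hp
  have heq : (∑' n : ℕ, ((1 - x) * x ^ n) *
      -(Gaux (((n : ℝ) + 1 + b) ^ (-q)) (Real.log ((n : ℝ) + 1 + a)) (k + 1) p))
      = -(auxT q a b x (k + 1) p) := by
    rw [auxT, ← tsum_neg]
    exact tsum_congr fun n => by ring
  rw [heq] at hder
  exact hder

lemma one_le_D (hq : 0 < q) (ha : 1 < a) (hb : 1 < b) (p : ℝ) (hp : 0 < p) (n : ℕ) :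
    1 ≤ ((n : ℝ) + 1 + a) ^ p * ((n : ℝ) + 1 + b) ^ q := by
  have h1 : (1 : ℝ) ≤ ((n : ℝ) + 1 + a) ^ p :=
    Real.one_le_rpow (by have := n.cast_nonneg (α := ℝ); linarith) hp.le
  have h2 : (1 : ℝ) ≤ ((n : ℝ) + 1 + b) ^ q :=
    Real.one_le_rpow (by have := n.cast_nonneg (α := ℝ); linarith) hq.le
  nlinarith

lemma summable_f1 (hq : 0 < q) (ha : 1 < a) (hb : 1 < b) (hx0 : 0 < x) (hx1 : x < 1)
    (p : ℝ) (hp : 0 < p) :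
    Summable (fun n : ℕ => x ^ (n + 1) / (((n : ℝ) + 1 + a) ^ p * ((n : ℝ) + 1 + b) ^ q)) := by
  apply Summable.of_nonneg_of_le (fun n => by positivity) (fun n => ?_)
    ((summable_geometric_of_lt_one hx0.le hx1).mul_left x)
  calc x ^ (n + 1) / (((n : ℝ) + 1 + a) ^ p * ((n : ℝ) + 1 + b) ^ q)
      ≤ x ^ (n + 1) / 1 := by
        apply div_le_div_of_nonneg_left (by positivity) one_pos (one_le_D hq ha hb p hp n)
    _ = x * x ^ n := by rw [div_one, pow_succ]; ring

lemma psi_eq (hq : 0 < q) (ha : 1 < a) (hb : 1 < b) (hx0 : 0 < x) (hx1 : x < 1)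
    (p : ℝ) (hp : 0 < p) : psiFun q a b x p = auxT q a b x 0 p := by
  have hC : (1 + a) ^ p * (1 + b) ^ q ≠ 0 := by
    have := Real.rpow_pos_of_pos (show (0 : ℝ) < 1 + a by linarith) p
    have := Real.rpow_pos_of_pos (show (0 : ℝ) < 1 + b by linarith) q
    positivity
  have h1 : genPolylogR p q a b x = ((1 + a) ^ p * (1 + b) ^ q) *
      ∑' n : ℕ, x ^ (n + 1) / (((n : ℝ) + 1 + a) ^ p * ((n : ℝ) + 1 + b) ^ q) := by
    rw [genPolylogR, ← tsum_mul_left]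
    exact tsum_congr fun n => by ring
  have h2 : genPolylogR p q a b x / ((1 + a) ^ p * (1 + b) ^ q) =
      ∑' n : ℕ, x ^ (n + 1) / (((n : ℝ) + 1 + a) ^ p * ((n : ℝ) + 1 + b) ^ q) := by
    rw [h1, mul_comm, mul_div_assoc, div_self hC, mul_one]
  have h3 : x / (1 - x) = ∑' n : ℕ, x ^ (n + 1) := by
    have h4 : ∑' n : ℕ, x ^ (n + 1) = x * ∑' n : ℕ, x ^ n := by
      rw [← tsum_mul_left]; exact tsum_congr fun n => by rw [pow_succ]; ring
    rw [h4, tsum_geometric_of_lt_one hx0.le hx1, div_eq_mul_inv]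
  have hgeo : Summable (fun n : ℕ => x ^ (n + 1)) := by
    simpa [pow_succ] using (summable_geometric_of_lt_one hx0.le hx1).mul_right x
  have hsub := Summable.tsum_sub (summable_f1 hq ha hb hx0 hx1 p hp) hgeo
  rw [psiFun, h2, h3, mul_div_assoc, ← hsub, ← tsum_mul_right, auxT]
  refine tsum_congr fun n => ?_
  have hna : (0 : ℝ) < (n : ℝ) + 1 + a := by have := n.cast_nonneg (α := ℝ); linarith
  have hnb : (0 : ℝ) < (n : ℝ) + 1 + b := by have := n.cast_nonneg (α := ℝ); linarith
  have hsum01 : ∑ j ∈ Finset.range 1, (p * Real.log ((n : ℝ) + 1 + a)) ^ j /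
      (Nat.factorial j : ℝ) = 1 := by simp
  have hea : (((n : ℝ) + 1 + a) ^ p)⁻¹ = Real.exp (-(p * Real.log ((n : ℝ) + 1 + a))) := by
    rw [Real.rpow_def_of_pos hna, ← Real.exp_neg]; ring_nf
  have heb : (((n : ℝ) + 1 + b) ^ (-q)) = (((n : ℝ) + 1 + b) ^ q)⁻¹ := by
    rw [Real.rpow_neg hnb.le]
  rw [Gaux, hsum01, heb]
  have hDa : ((n : ℝ) + 1 + a) ^ p ≠ 0 := (Real.rpow_pos_of_pos hna p).ne'
  have hDb : ((n : ℝ) + 1 + b) ^ q ≠ 0 := (Real.rpow_pos_of_pos hnb q).ne'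
  rw [← hea]
  field_simp
  ring

lemma iterated_eq (hq : 0 < q) (ha : 1 < a) (hb : 1 < b) (hx0 : 0 < x) (hx1 : x < 1)
    (k : ℕ) : ∀ p : ℝ, 0 < p →
    iteratedDeriv k (psiFun q a b x) p = (-1 : ℝ) ^ k * auxT q a b x k p := by
  induction k with
  | zero => intro p hp; simpa using psi_eq hq ha hb hx0 hx1 p hp
  | succ k ih =>
    intro p hp
    rw [iteratedDeriv_succ]
    have hev : iteratedDeriv k (psiFun q a b x) =ᶠ[nhds p]
        (fun z => (-1 : ℝ) ^ k * auxT q a b x k z) := by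
      filter_upwards [isOpen_Ioi.mem_nhds (show p ∈ Set.Ioi (0:ℝ) from hp)] with z hz
      exact ih z hz
    rw [hev.deriv_eq]
    have := ((auxT_hasDerivAt hq ha hb hx0 hx1 k p hp).const_mul ((-1 : ℝ) ^ k)).deriv
    rw [this]
    ring

end


section
variable {q a b x : ℝ}

/-- Complex extension of the series for `ψ`. -/
noncomputable def auxTC (q a b x : ℝ) (z : ℂ) : ℂ :=
  ∑' n : ℕ, (((1 - x) * x ^ n : ℝ) : ℂ) *
    ((1 - ((((n : ℝ) + 1 + b) ^ (-q) : ℝ) : ℂ) *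
      Complex.exp (-(z * ((Real.log ((n : ℝ) + 1 + a) : ℝ) : ℂ)))) / z)

lemma termC_hasDerivAt (n : ℕ) (z : ℂ) (hz : z ≠ 0) :
    HasDerivAt (fun z : ℂ => (((1 - x) * x ^ n : ℝ) : ℂ) *
      ((1 - ((((n : ℝ) + 1 + b) ^ (-q) : ℝ) : ℂ) *
        Complex.exp (-(z * ((Real.log ((n : ℝ) + 1 + a) : ℝ) : ℂ)))) / z))
      ((((1 - x) * x ^ n : ℝ) : ℂ) *
        ((((((n : ℝ) + 1 + b) ^ (-q) : ℝ) : ℂ) * ((Real.log ((n : ℝ) + 1 + a) : ℝ) : ℂ) *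
            Complex.exp (-(z * ((Real.log ((n : ℝ) + 1 + a) : ℝ) : ℂ))) * z -
          (1 - ((((n : ℝ) + 1 + b) ^ (-q) : ℝ) : ℂ) *
            Complex.exp (-(z * ((Real.log ((n : ℝ) + 1 + a) : ℝ) : ℂ))))) / z ^ 2)) z := by
  set A : ℂ := ((((n : ℝ) + 1 + b) ^ (-q) : ℝ) : ℂ)
  set α : ℂ := ((Real.log ((n : ℝ) + 1 + a) : ℝ) : ℂ)
  have h1 : HasDerivAt (fun z : ℂ => -(z * α)) (-α) z := by
    simpa using ((hasDerivAt_id z).mul_const α).fun_neg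
  have h2 : HasDerivAt (fun z : ℂ => (1 : ℂ) - A * Complex.exp (-(z * α)))
      (A * α * Complex.exp (-(z * α))) z := by
    have := (h1.cexp.const_mul A).const_sub 1
    refine this.congr_deriv ?_
    ring
  have h3 := (h2.fun_div (hasDerivAt_id z) hz).const_mul (((1 - x) * x ^ n : ℝ) : ℂ)
  refine h3.congr_deriv ?_
  simp only [id_eq, mul_one]
end

section
variable {q a b x : ℝ}

lemma normE_le (ha : 1 < a) (n : ℕ) {z : ℂ} (hz : 0 ≤ z.re) :
    ‖Complex.exp (-(z * ((Real.log ((n : ℝ) + 1 + a) : ℝ) : ℂ)))‖ ≤ 1 := by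
  rw [Complex.norm_exp]
  apply Real.exp_le_one_iff.mpr
  have hα : 0 ≤ Real.log ((n : ℝ) + 1 + a) :=
    Real.log_nonneg (by have := n.cast_nonneg (α := ℝ); linarith)
  simp only [Complex.neg_re, Complex.mul_re, Complex.ofReal_re, Complex.ofReal_im]
  nlinarith [mul_nonneg hz hα]

lemma summable_aux1 (ha : 1 < a) (hx0 : 0 < x) (hx1 : x < 1) (C D : ℝ) :
    Summable (fun n : ℕ => ((1 - x) * x ^ n) *
      (Real.log ((n : ℝ) + 1 + a) * C + D)) := by
  have hxn : ‖x‖ < 1 := by rw [Real.norm_eq_abs, abs_of_pos hx0]; exact hx1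
  have hs1 : Summable (fun n : ℕ => ((n : ℝ) + 1 + a) * x ^ n) := by
    have h1 := summable_pow_mul_geometric_of_norm_lt_one 1 hxn
    have h2 := summable_geometric_of_lt_one hx0.le hx1
    exact ((h1.add (h2.mul_left (1 + a))).congr (fun n => by push_cast; ring))
  have hlog : Summable (fun n : ℕ => ((1 - x) * x ^ n) * Real.log ((n : ℝ) + 1 + a)) := by
    apply Summable.of_nonneg_of_le ?_ ?_ (hs1.mul_left (1 - x))
    · intro n
      have hα : 0 ≤ Real.log ((n : ℝ) + 1 + a) :=
        Real.log_nonneg (by have := n.cast_nonneg (α := ℝ); linarith)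
      have : (0:ℝ) ≤ x ^ n := pow_nonneg hx0.le n
      exact mul_nonneg (mul_nonneg (by linarith) this) hα
    · intro n
      have hpos : (0:ℝ) < (n : ℝ) + 1 + a := by have := n.cast_nonneg (α := ℝ); linarith
      have hα : Real.log ((n : ℝ) + 1 + a) ≤ (n : ℝ) + 1 + a := by
        have := Real.log_le_sub_one_of_pos hpos
        linarith
      have h1 : (0:ℝ) ≤ (1 - x) * x ^ n := by
        have : (0:ℝ) ≤ x ^ n := pow_nonneg hx0.le n
        nlinarith
      calc ((1 - x) * x ^ n) * Real.log ((n : ℝ) + 1 + a)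
          ≤ ((1 - x) * x ^ n) * ((n : ℝ) + 1 + a) := mul_le_mul_of_nonneg_left hα h1
        _ = (1 - x) * (((n : ℝ) + 1 + a) * x ^ n) := by ring
  have hgeom := (summable_geometric_of_lt_one hx0.le hx1).mul_left (1 - x)
  exact ((hlog.mul_right C).add (hgeom.mul_right D)).congr (fun n => by ring)
end

section
variable {q a b x : ℝ}

lemma auxTC_differentiableOn (hq : 0 < q) (ha : 1 < a) (hb : 1 < b)
    (hx0 : 0 < x) (hx1 : x < 1) :
    DifferentiableOn ℂ (auxTC q a b x) {z : ℂ | 0 < z.re} := by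
  intro z₀ hz₀
  have hz₀' : (0:ℝ) < z₀.re := hz₀
  set ε : ℝ := z₀.re / 2 with hε
  have hε0 : 0 < ε := half_pos hz₀'
  have hder := hasDerivAt_tsum_of_isPreconnected
    (u := fun n : ℕ => ((1 - x) * x ^ n) * (Real.log ((n : ℝ) + 1 + a) * (1 / ε) + 2 / ε ^ 2))
    (t := {z : ℂ | ε < z.re})
    (g := fun n : ℕ => fun z : ℂ => (((1 - x) * x ^ n : ℝ) : ℂ) *
      ((1 - ((((n : ℝ) + 1 + b) ^ (-q) : ℝ) : ℂ) *
        Complex.exp (-(z * ((Real.log ((n : ℝ) + 1 + a) : ℝ) : ℂ)))) / z))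
    (g' := fun n : ℕ => fun z : ℂ => (((1 - x) * x ^ n : ℝ) : ℂ) *
        ((((((n : ℝ) + 1 + b) ^ (-q) : ℝ) : ℂ) * ((Real.log ((n : ℝ) + 1 + a) : ℝ) : ℂ) *
            Complex.exp (-(z * ((Real.log ((n : ℝ) + 1 + a) : ℝ) : ℂ))) * z -
          (1 - ((((n : ℝ) + 1 + b) ^ (-q) : ℝ) : ℂ) *
            Complex.exp (-(z * ((Real.log ((n : ℝ) + 1 + a) : ℝ) : ℂ))))) / z ^ 2))
    (y₀ := z₀) (y := z₀)
    (summable_aux1 ha hx0 hx1 _ _)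
    (isOpen_lt continuous_const Complex.continuous_re)
    ?hconn ?hg ?hg' (by simpa [hε] using half_lt_self hz₀') ?hg0
    (by simpa [hε] using half_lt_self hz₀')
  case hconn =>
    exact (convex_halfSpace_re_gt ε).isPreconnected
  case hg =>
    intro n y hy
    have hy0 : y ≠ 0 := by
      intro h
      rw [h] at hy
      simp only [Set.mem_setOf_eq, Complex.zero_re] at hy
      linarith
    exact termC_hasDerivAt n y hy0
  case hg' =>
    intro n y hy
    have hyre : ε < y.re := hy
    have hynorm : ε ≤ ‖y‖ := le_trans hyre.le (Complex.re_le_norm y)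
    have hy0 : (0:ℝ) < ‖y‖ := lt_of_lt_of_le hε0 hynorm
    set A : ℝ := ((n : ℝ) + 1 + b) ^ (-q)
    set α : ℝ := Real.log ((n : ℝ) + 1 + a)
    have hA0 : 0 ≤ A := Real.rpow_nonneg (by have := n.cast_nonneg (α := ℝ); linarith) _
    have hA1 : A ≤ 1 := Real.rpow_le_one_of_one_le_of_nonpos
      (by have := n.cast_nonneg (α := ℝ); linarith) (by linarith)
    have hα0 : 0 ≤ α := Real.log_nonneg (by have := n.cast_nonneg (α := ℝ); linarith)
    have hE : ‖Complex.exp (-(y * (α : ℂ)))‖ ≤ 1 := normE_le ha n (by linarith : 0 ≤ y.re)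
    have hc0 : (0:ℝ) ≤ (1 - x) * x ^ n := by
      have : (0:ℝ) ≤ x ^ n := pow_nonneg hx0.le n
      nlinarith
    rw [norm_mul, norm_div]
    have hnum : ‖(A : ℂ) * (α : ℂ) * Complex.exp (-(y * (α : ℂ))) * y -
        (1 - (A : ℂ) * Complex.exp (-(y * (α : ℂ))))‖ ≤ α * ‖y‖ + 2 := by
      have t1 : ‖(A : ℂ) * (α : ℂ) * Complex.exp (-(y * (α : ℂ))) * y‖ ≤ α * ‖y‖ := by
        rw [norm_mul, norm_mul, norm_mul, Complex.norm_real, Complex.norm_real,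
          Real.norm_eq_abs, Real.norm_eq_abs, abs_of_nonneg hA0, abs_of_nonneg hα0]
        calc A * α * ‖Complex.exp (-(y * (α : ℂ)))‖ * ‖y‖
            ≤ 1 * α * 1 * ‖y‖ := by
              apply mul_le_mul_of_nonneg_right _ (norm_nonneg y)
              apply mul_le_mul (mul_le_mul_of_nonneg_right hA1 hα0) hE (norm_nonneg _)
                (by positivity)
          _ = α * ‖y‖ := by ring
      have t2 : ‖(1 : ℂ) - (A : ℂ) * Complex.exp (-(y * (α : ℂ)))‖ ≤ 2 := by
        calc ‖(1 : ℂ) - (A : ℂ) * Complex.exp (-(y * (α : ℂ)))‖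
            ≤ ‖(1 : ℂ)‖ + ‖(A : ℂ) * Complex.exp (-(y * (α : ℂ)))‖ := norm_sub_le _ _
          _ ≤ 1 + 1 * 1 := by
              rw [norm_one, norm_mul, Complex.norm_real, Real.norm_eq_abs, abs_of_nonneg hA0]
              have := mul_le_mul hA1 hE (norm_nonneg _) zero_le_one
              linarith
          _ = 2 := by norm_num
      calc ‖(A : ℂ) * (α : ℂ) * Complex.exp (-(y * (α : ℂ))) * y -
            (1 - (A : ℂ) * Complex.exp (-(y * (α : ℂ))))‖
          ≤ ‖(A : ℂ) * (α : ℂ) * Complex.exp (-(y * (α : ℂ))) * y‖ +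
            ‖(1 : ℂ) - (A : ℂ) * Complex.exp (-(y * (α : ℂ)))‖ := norm_sub_le _ _
        _ ≤ α * ‖y‖ + 2 := add_le_add t1 t2
    have hnc : ‖(((1 - x) * x ^ n : ℝ) : ℂ)‖ = (1 - x) * x ^ n := by
      rw [Complex.norm_real, Real.norm_eq_abs, abs_of_nonneg hc0]
    rw [hnc]
    apply mul_le_mul_of_nonneg_left _ hc0
    calc ‖(A : ℂ) * (α : ℂ) * Complex.exp (-(y * (α : ℂ))) * y -
          (1 - (A : ℂ) * Complex.exp (-(y * (α : ℂ))))‖ / ‖y ^ 2‖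
        ≤ (α * ‖y‖ + 2) / ‖y‖ ^ 2 := by
          rw [norm_pow]
          exact div_le_div_of_nonneg_right hnum (by positivity : (0:ℝ) ≤ ‖y‖ ^ 2)
      _ = α / ‖y‖ + 2 / ‖y‖ ^ 2 := by
          rw [add_div, sq, mul_div_mul_right _ _ hy0.ne']
      _ ≤ α * (1 / ε) + 2 / ε ^ 2 := by
          apply add_le_add
          · rw [mul_one_div]
            exact div_le_div_of_nonneg_left hα0 hε0 hynorm
          · apply div_le_div_of_nonneg_left (by norm_num) (by positivity)
            exact pow_le_pow_left₀ hε0.le hynorm 2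
  case hg0 =>
    apply Summable.of_norm
    apply Summable.of_nonneg_of_le (fun n => norm_nonneg _) ?_
      (((summable_geometric_of_lt_one hx0.le hx1).mul_left ((1 - x) * (2 / ε))))
    intro n
    have hz0re : ε < z₀.re := by simpa [hε] using half_lt_self hz₀'
    have hznorm : ε ≤ ‖z₀‖ := le_trans hz0re.le (Complex.re_le_norm z₀)
    have hz0n : (0:ℝ) < ‖z₀‖ := lt_of_lt_of_le hε0 hznorm
    set A : ℝ := ((n : ℝ) + 1 + b) ^ (-q)
    set α : ℝ := Real.log ((n : ℝ) + 1 + a)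
    have hA0 : 0 ≤ A := Real.rpow_nonneg (by have := n.cast_nonneg (α := ℝ); linarith) _
    have hA1 : A ≤ 1 := Real.rpow_le_one_of_one_le_of_nonpos
      (by have := n.cast_nonneg (α := ℝ); linarith) (by linarith)
    have hE : ‖Complex.exp (-(z₀ * (α : ℂ)))‖ ≤ 1 := normE_le ha n (by linarith : 0 ≤ z₀.re)
    have hc0 : (0:ℝ) ≤ (1 - x) * x ^ n := by
      have : (0:ℝ) ≤ x ^ n := pow_nonneg hx0.le n
      nlinarith
    rw [norm_mul, norm_div, Complex.norm_real, Real.norm_eq_abs, abs_of_nonneg hc0]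
    have t2 : ‖(1 : ℂ) - (A : ℂ) * Complex.exp (-(z₀ * (α : ℂ)))‖ ≤ 2 := by
      calc ‖(1 : ℂ) - (A : ℂ) * Complex.exp (-(z₀ * (α : ℂ)))‖
          ≤ ‖(1 : ℂ)‖ + ‖(A : ℂ) * Complex.exp (-(z₀ * (α : ℂ)))‖ := norm_sub_le _ _
        _ ≤ 1 + 1 * 1 := by
            rw [norm_one, norm_mul, Complex.norm_real, Real.norm_eq_abs, abs_of_nonneg hA0]
            have := mul_le_mul hA1 hE (norm_nonneg _) zero_le_one
            linarith
        _ = 2 := by norm_num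
    calc (1 - x) * x ^ n * (‖(1 : ℂ) - (A : ℂ) * Complex.exp (-(z₀ * (α : ℂ)))‖ / ‖z₀‖)
        ≤ (1 - x) * x ^ n * (2 / ε) := by
          apply mul_le_mul_of_nonneg_left _ hc0
          calc ‖(1 : ℂ) - (A : ℂ) * Complex.exp (-(z₀ * (α : ℂ)))‖ / ‖z₀‖
              ≤ 2 / ‖z₀‖ := div_le_div_of_nonneg_right t2 hz0n.le
            _ ≤ 2 / ε := div_le_div_of_nonneg_left (by norm_num) hε0 hznorm
      _ = (1 - x) * (2 / ε) * x ^ n := by ring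
  exact (hder.differentiableAt).differentiableWithinAt
end


section
variable {q a b x : ℝ}

lemma auxTC_real (hq : 0 < q) (ha : 1 < a) (hb : 1 < b) (hx0 : 0 < x) (hx1 : x < 1)
    (p : ℝ) (hp : 0 < p) :
    auxTC q a b x (p : ℂ) = ((auxT q a b x 0 p : ℝ) : ℂ) := by
  rw [auxT, auxTC]
  rw [Complex.ofReal_tsum]
  refine tsum_congr fun n => ?_
  have h1 : (-(((p : ℝ) : ℂ) * ((Real.log ((n : ℝ) + 1 + a) : ℝ) : ℂ)))
      = (((-(p * Real.log ((n : ℝ) + 1 + a)) : ℝ)) : ℂ) := by push_cast; ring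
  rw [h1, ← Complex.ofReal_exp]
  have hG : Gaux (((n : ℝ) + 1 + b) ^ (-q)) (Real.log ((n : ℝ) + 1 + a)) 0 p
      = (1 - ((n : ℝ) + 1 + b) ^ (-q) * Real.exp (-(p * Real.log ((n : ℝ) + 1 + a)))) / p := by
    simp [Gaux]
  rw [hG]
  push_cast
  ring

lemma psi_analytic (hq : 0 < q) (ha : 1 < a) (hb : 1 < b) (hx0 : 0 < x) (hx1 : x < 1) :
    AnalyticOnNhd ℝ (psiFun q a b x) (Set.Ioi 0) := by
  intro p hp
  have hp' : (0:ℝ) < p := hp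
  have hopen : IsOpen {z : ℂ | 0 < z.re} := isOpen_lt continuous_const Complex.continuous_re
  have hAN := (auxTC_differentiableOn hq ha hb hx0 hx1).analyticOnNhd hopen
  have h2 : AnalyticAt ℂ (auxTC q a b x) ((p : ℝ) : ℂ) := hAN _ (by simpa using hp')
  have h2' : AnalyticAt ℝ (auxTC q a b x) ((p : ℝ) : ℂ) := h2.restrictScalars
  have h1 : AnalyticAt ℝ (fun t : ℝ => ((t : ℝ) : ℂ)) p := Complex.ofRealCLM.analyticAt p
  have h3 : AnalyticAt ℝ (fun z : ℂ => z.re) (auxTC q a b x ((p : ℝ) : ℂ)) :=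
    Complex.reCLM.analyticAt _
  have hcomp : AnalyticAt ℝ (fun t : ℝ => (auxTC q a b x ((t : ℝ) : ℂ)).re) p :=
    (h3.comp h2').comp h1
  apply hcomp.congr
  filter_upwards [isOpen_Ioi.mem_nhds (show p ∈ Set.Ioi (0:ℝ) from hp)] with t ht
  have ht' : (0:ℝ) < t := ht
  rw [auxTC_real hq ha hb hx0 hx1 t ht', Complex.ofReal_re,
    ← psi_eq hq ha hb hx0 hx1 t ht']
end

lemma iteratedDerivWithin_of_isOpen' {f : ℝ → ℝ} {s : Set ℝ} {x : ℝ} (n : ℕ)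
    (hs : IsOpen s) (hx : x ∈ s) :
    iteratedDerivWithin n f s x = iteratedDeriv n f x := by
  simp only [iteratedDerivWithin, iteratedDeriv]
  rw [iteratedFDerivWithin_of_isOpen n hs hx]

theorem psi_completely_monotonic
    (q a b x : ℝ) (hq : 0 < q) (ha : 1 < a) (hb : 1 < b) (hx : x ∈ Set.Ioo (0 : ℝ) 1) :
    ContDiffOn ℝ (⊤ : ℕ∞) (psiFun q a b x) (Set.Ioi 0) ∧
    ∀ (k : ℕ) (p : ℝ), 0 < p →
      0 ≤ (-1) ^ k * iteratedDerivWithin k (psiFun q a b x) (Set.Ioi 0) p := by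
  obtain ⟨hx0, hx1⟩ := hx
  constructor
  · exact (psi_analytic hq ha hb hx0 hx1).contDiffOn (uniqueDiffOn_Ioi 0)
  · intro k p hp
    rw [iteratedDerivWithin_of_isOpen' k isOpen_Ioi hp,
      iterated_eq hq ha hb hx0 hx1 k p hp]
    have h := auxT_nonneg hq ha hb hx0 hx1 k p hp
    have : (-1 : ℝ) ^ k * ((-1 : ℝ) ^ k * auxT q a b x k p) = auxT q a b x k p := by
      rw [← mul_assoc, ← mul_pow]
      simp
    rw [this]
    exact h
end

section
/- Let p, q, a, b be real numbers with p, q > 0 and a, b > 1, x ∈ (0,1), and for t ≥ 0 let j(t) denote the number of positive integers n with (n+a)(n+b)^{q/p} ≤ e^t. Then the function ψ(p) defined by ψ(p) = ( Φ_{p,q}(a,b;x) / ((1+a)^p (1+b)^q) − x/(1−x) ) · (x−1)/(p x) satisfies ψ(p) = ∫_0^∞ e^{−p t} x^{j(t)} dt for all p > 0. -/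
/-!
Put `g n = (n + a) (n + b) ^ (q / p)`, so that `j t` counts the `n ≥ 1` with `g n ≤ e ^ t`. Since
`g` is increasing, `x ^ j t - 1` telescopes into `∑ (x ^ (k + 1) - x ^ k)` over those `k` with
`log g (k + 1) ≤ t`. Integrating term by term against `e ^ (-p t)` over `(0, ∞)` gives
`1 / p + (x - 1) / p * ∑ x ^ k / g (k + 1) ^ p`, and `g (k + 1) ^ p = (k + 1 + a) ^ p (k + 1 + b) ^ q`
identifies that series with `Φ_{p,q}(a, b; x) / (x (1 + a) ^ p (1 + b) ^ q)`.
-/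

open MeasureTheory

/-- `jCountR p q a b t` is the number of positive integers `n` with `(n+a)(n+b)^{q/p} ≤ e^t`. -/
noncomputable def jCountR (p q a b : ℝ) (t : ℝ) : ℕ :=
  Set.ncard {n : ℕ | 0 < n ∧ ((n : ℝ) + a) * ((n : ℝ) + b) ^ (q / p) ≤ Real.exp t}

open Filter Set Real

noncomputable def countPosLe (g : ℕ → ℝ) (T : ℝ) : ℕ :=
  Set.ncard {n : ℕ | 0 < n ∧ g n ≤ T}

section countPosLe

variable {g : ℕ → ℝ}

lemma exists_setOf_pos_le_eq_Icc (hg : Monotone g) (hg_top : Tendsto g atTop atTop) (T : ℝ) :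
    ∃ N : ℕ, {n : ℕ | 0 < n ∧ g n ≤ T} = Icc 1 N := by
  have hex : ∃ N, T < g (N + 1) :=
    ((tendsto_add_atTop_iff_nat 1).2 hg_top |>.eventually_gt_atTop T).exists
  refine ⟨Nat.find hex, Set.ext fun n => ?_⟩
  rcases n with _ | k
  · simp
  · simp only [mem_ofPred_eq, mem_Icc, Nat.succ_pos, true_and, le_add_iff_nonneg_left, zero_le,
      Nat.add_one_le_iff]
    constructor
    · intro hk
      by_contra! h
      exact (Nat.find_spec hex).not_ge ((hg (by omega)).trans hk)
    · exact fun hk => not_lt.1 (Nat.find_min hex hk)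

lemma setOf_pos_le_eq_Icc_countPosLe (hg : Monotone g) (hg_top : Tendsto g atTop atTop)
    (T : ℝ) : {n : ℕ | 0 < n ∧ g n ≤ T} = Icc 1 (countPosLe g T) := by
  obtain ⟨N, hN⟩ := exists_setOf_pos_le_eq_Icc hg hg_top T
  rw [countPosLe, hN, ncard_Icc_nat, Nat.add_sub_cancel]

lemma le_iff_lt_countPosLe (hg : Monotone g) (hg_top : Tendsto g atTop atTop) (T : ℝ) (k : ℕ) :
    g (k + 1) ≤ T ↔ k < countPosLe g T := by
  simpa [Nat.add_one_le_iff] using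
    Set.ext_iff.1 (setOf_pos_le_eq_Icc_countPosLe hg hg_top T) (k + 1)

lemma countPosLe_mono (hg : Monotone g) (hg_top : Tendsto g atTop atTop) :
    Monotone (countPosLe g) := fun T T' hT =>
  le_of_forall_lt fun k hk => (le_iff_lt_countPosLe hg hg_top T' k).1
    (((le_iff_lt_countPosLe hg hg_top T k).2 hk).trans hT)

lemma hasSum_pow_countPosLe (hg : Monotone g) (hg_top : Tendsto g atTop atTop) (T x : ℝ) :
    HasSum (fun k => if g (k + 1) ≤ T then x ^ k * (x - 1) else 0) (x ^ countPosLe g T - 1) := by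
  simp_rw [le_iff_lt_countPosLe hg hg_top T]
  have h : HasSum (fun k => if k < countPosLe g T then x ^ k * (x - 1) else 0)
      (∑ k ∈ Finset.range (countPosLe g T), if k < countPosLe g T then x ^ k * (x - 1) else 0) :=
    hasSum_sum_of_ne_finset_zero fun k hk => if_neg (by simpa using hk)
  rwa [Finset.sum_ite_of_true (fun k hk => Finset.mem_range.1 hk), ← Finset.sum_mul,
    geom_sum_mul] at h

end countPosLe

lemma integrableOn_exp_neg_mul_Ioi {p : ℝ} (hp : 0 < p) (c : ℝ) :
    IntegrableOn (fun t => exp (-(p * t))) (Ioi c) := by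
  simpa only [neg_mul] using exp_neg_integrableOn_Ioi c hp

lemma integral_exp_neg_mul_Ioi_zero {p : ℝ} (hp : 0 < p) :
    ∫ t in Ioi 0, exp (-(p * t)) = 1 / p := by
  simp only [← neg_mul]
  rw [integral_exp_mul_Ioi (neg_lt_zero.2 hp)]
  simp

lemma setIntegral_Ioi_zero_indicator_Ici_exp {c p : ℝ} (hc : 0 ≤ c) (hp : 0 < p) :
    ∫ t in Ioi 0, (Ici c).indicator (fun t => exp (-(p * t))) t = exp (-(p * c)) / p := by
  have hset : (Ici c ∩ Ioi 0 : Set ℝ) =ᵐ[volume] (Ioi c : Set ℝ) := by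
    have h : (Ici c ∩ Ioi 0 : Set ℝ) =ᵐ[volume] (Ici c ∩ Ici 0 : Set ℝ) :=
      EventuallyEq.rfl.inter Ioi_ae_eq_Ici
    rw [inter_eq_left.2 (Ici_subset_Ici.2 hc)] at h
    exact h.trans Ioi_ae_eq_Ici.symm
  rw [integral_indicator measurableSet_Ici, Measure.restrict_restrict measurableSet_Ici,
    setIntegral_congr_set hset]
  simp only [← neg_mul]
  rw [integral_exp_mul_Ioi (neg_lt_zero.2 hp)]
  field_simp

lemma integral_tsum_mul_indicator_Ici_exp {w c : ℕ → ℝ} {p : ℝ} (hw : Summable fun k => ‖w k‖)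
    (hc : ∀ k, 0 ≤ c k) (hp : 0 < p) :
    ∫ t in Ioi 0, ∑' k, w k * (Ici (c k)).indicator (fun t => exp (-(p * t))) t =
      ∑' k, w k * exp (-(p * c k)) / p := by
  have hnorm : ∀ k, ∫ t in Ioi 0, ‖w k * (Ici (c k)).indicator (fun t => exp (-(p * t))) t‖ =
      ‖w k‖ * exp (-(p * c k)) / p := fun k => by
    simp only [norm_mul, norm_indicator_eq_indicator_norm, norm_of_nonneg (exp_pos _).le]
    rw [integral_const_mul, setIntegral_Ioi_zero_indicator_Ici_exp (hc k) hp, mul_div_assoc]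
  have hsum : Summable fun k => ‖w k‖ * exp (-(p * c k)) / p := by
    refine (hw.div_const p).of_nonneg_of_le (fun k => by positivity) fun k => ?_
    gcongr
    exact mul_le_of_le_one_right (norm_nonneg _)
      (exp_le_one_iff.2 (neg_nonpos.2 (mul_nonneg hp.le (hc k))))
  rw [← integral_tsum_of_summable_integral_norm (fun k =>
    ((integrableOn_exp_neg_mul_Ioi hp 0).indicator measurableSet_Ici).const_mul (w k))
    (by simpa only [hnorm])]
  refine tsum_congr fun k => ?_
  rw [integral_const_mul, setIntegral_Ioi_zero_indicator_Ici_exp (hc k) hp, mul_div_assoc]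

section countPosLe_exp

variable {g : ℕ → ℝ} {p x : ℝ}

lemma integrableOn_exp_mul_pow_countPosLe (hg : Monotone g) (hg_top : Tendsto g atTop atTop)
    (hp : 0 < p) (hx : |x| ≤ 1) :
    IntegrableOn (fun t => exp (-(p * t)) * x ^ countPosLe g (exp t)) (Ioi 0) := by
  have hmeas : Measurable fun t => x ^ countPosLe g (exp t) :=
    measurable_from_nat.comp ((countPosLe_mono hg hg_top).comp exp_monotone).measurable
  refine (integrableOn_exp_neg_mul_Ioi hp 0).mono'
    ((by fun_prop : Continuous fun t => exp (-(p * t))).aestronglyMeasurable.mul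
      hmeas.aestronglyMeasurable) (ae_of_all _ fun t => ?_)
  rw [norm_mul, norm_pow, norm_of_nonneg (exp_pos _).le]
  exact mul_le_of_le_one_right (exp_pos _).le (pow_le_one₀ (norm_nonneg _) hx)

lemma exp_mul_pow_countPosLe_eq_add_tsum (hg : Monotone g) (hg_pos : ∀ k, 0 < g (k + 1))
    (hg_top : Tendsto g atTop atTop) (t : ℝ) :
    exp (-(p * t)) * x ^ countPosLe g (exp t) = exp (-(p * t)) +
      ∑' k, x ^ k * (x - 1) * (Ici (log (g (k + 1)))).indicator (fun t => exp (-(p * t))) t := by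
  have hterm : ∀ k,
      x ^ k * (x - 1) * (Ici (log (g (k + 1)))).indicator (fun t => exp (-(p * t))) t =
        exp (-(p * t)) * if g (k + 1) ≤ exp t then x ^ k * (x - 1) else 0 := fun k => by
    simp only [indicator, mem_Ici, log_le_iff_le_exp (hg_pos k)]
    split_ifs <;> ring
  rw [tsum_congr hterm, tsum_mul_left, (hasSum_pow_countPosLe hg hg_top _ x).tsum_eq]
  ring

theorem integral_exp_mul_pow_countPosLe (hg : Monotone g) (hg_one : ∀ k, 1 ≤ g (k + 1))
    (hg_top : Tendsto g atTop atTop) (hp : 0 < p) (hx : |x| < 1) :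
    ∫ t in Ioi 0, exp (-(p * t)) * x ^ countPosLe g (exp t) =
      (1 + (x - 1) * ∑' k, x ^ k / g (k + 1) ^ p) / p := by
  have hg_pos : ∀ k, 0 < g (k + 1) := fun k => one_pos.trans_le (hg_one k)
  have hsplit := exp_mul_pow_countPosLe_eq_add_tsum (p := p) (x := x) hg hg_pos hg_top
  have htail_int : IntegrableOn (fun t =>
      ∑' k, x ^ k * (x - 1) * (Ici (log (g (k + 1)))).indicator (fun t => exp (-(p * t))) t)
      (Ioi 0) :=
    ((integrableOn_exp_mul_pow_countPosLe hg hg_top hp hx.le).sub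
      (integrableOn_exp_neg_mul_Ioi hp 0)).congr_fun
      (fun t _ => by simp only [Pi.sub_apply, hsplit, add_sub_cancel_left]) measurableSet_Ioi
  have hw : Summable fun k => ‖x ^ k * (x - 1)‖ := by
    simpa only [norm_mul, norm_pow] using
      (summable_geometric_of_lt_one (norm_nonneg x) hx).mul_right ‖x - 1‖
  have hexp_log : ∀ k, exp (-(p * log (g (k + 1)))) = (g (k + 1) ^ p)⁻¹ := fun k => by
    rw [rpow_def_of_pos (hg_pos k), ← exp_neg, mul_comm]
  rw [setIntegral_congr_fun measurableSet_Ioi fun t _ => hsplit t,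
    integral_add (integrableOn_exp_neg_mul_Ioi hp 0) htail_int, integral_exp_neg_mul_Ioi_zero hp,
    integral_tsum_mul_indicator_Ici_exp hw (fun k => log_nonneg (hg_one k)) hp]
  simp only [hexp_log, div_eq_mul_inv, tsum_mul_right, ← tsum_mul_left]
  rw [← add_mul]
  congr 2
  exact tsum_congr fun k => by ring

end countPosLe_exp

section shiftedProduct

variable {a b r : ℝ}

lemma monotone_add_mul_add_rpow (ha : 0 ≤ a) (hb : 0 ≤ b) (hr : 0 ≤ r) :
    Monotone fun n : ℕ => ((n : ℝ) + a) * ((n : ℝ) + b) ^ r := fun m n hmn => by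
  have hmn' : (m : ℝ) ≤ n := by exact_mod_cast hmn
  dsimp only
  gcongr

lemma natCast_le_add_mul_add_rpow (ha : 0 ≤ a) (hb : 0 ≤ b) (hr : 0 ≤ r) {n : ℕ} (hn : 1 ≤ n) :
    (n : ℝ) ≤ ((n : ℝ) + a) * ((n : ℝ) + b) ^ r := by
  have hn' : (1 : ℝ) ≤ n := by exact_mod_cast hn
  calc (n : ℝ) ≤ (n : ℝ) + a := le_add_of_nonneg_right ha
    _ ≤ ((n : ℝ) + a) * ((n : ℝ) + b) ^ r :=
      le_mul_of_one_le_right (by positivity) (one_le_rpow (by linarith) hr)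

lemma tendsto_add_mul_add_rpow (ha : 0 ≤ a) (hb : 0 ≤ b) (hr : 0 ≤ r) :
    Tendsto (fun n : ℕ => ((n : ℝ) + a) * ((n : ℝ) + b) ^ r) atTop atTop :=
  tendsto_atTop_mono' _ ((eventually_ge_atTop 1).mono fun _ hn =>
    natCast_le_add_mul_add_rpow ha hb hr hn) tendsto_natCast_atTop_atTop

end shiftedProduct

lemma genPolylogR_eq_mul_tsum (p q a b x : ℝ) :
    genPolylogR p q a b x = (1 + a) ^ p * (1 + b) ^ q *
      (x * ∑' k : ℕ, x ^ k / (((k : ℝ) + 1 + a) ^ p * ((k : ℝ) + 1 + b) ^ q)) := by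
  rw [genPolylogR, ← tsum_mul_left, ← tsum_mul_left]
  exact tsum_congr fun k => by ring

theorem psi_integral_representation
    (q a b x : ℝ) (hq : 0 < q) (ha : 1 < a) (hb : 1 < b) (hx : x ∈ Set.Ioo (0 : ℝ) 1) :
    ∀ p : ℝ, 0 < p →
      (genPolylogR p q a b x / ((1 + a) ^ p * (1 + b) ^ q) - x / (1 - x)) * (x - 1) / (p * x) =
        ∫ t in Set.Ioi (0 : ℝ), Real.exp (-(p * t)) * x ^ (jCountR p q a b t) := by
  intro p hp
  obtain ⟨hx0, hx1⟩ := hx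
  have ha0 : 0 ≤ a := by linarith
  have hb0 : 0 ≤ b := by linarith
  have hr : 0 ≤ q / p := (div_pos hq hp).le
  have hg_pow : ∀ k : ℕ, ((((k + 1 : ℕ) : ℝ) + a) * (((k + 1 : ℕ) : ℝ) + b) ^ (q / p)) ^ p =
      ((k : ℝ) + 1 + a) ^ p * ((k : ℝ) + 1 + b) ^ q := fun k => by
    push_cast
    rw [mul_rpow (by positivity) (by positivity), ← rpow_mul (by positivity),
      div_mul_cancel₀ q hp.ne']
  have hint := integral_exp_mul_pow_countPosLe (monotone_add_mul_add_rpow ha0 hb0 hr)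
    (fun k => (Nat.one_le_cast.2 k.succ_pos).trans (natCast_le_add_mul_add_rpow ha0 hb0 hr
      k.succ_pos)) (tendsto_add_mul_add_rpow ha0 hb0 hr) hp (abs_lt.2 ⟨by linarith, hx1⟩)
  simp only [hg_pow] at hint
  rw [show jCountR p q a b = fun t => countPosLe _ (exp t) from rfl, hint, genPolylogR_eq_mul_tsum]
  have h1x : 1 - x ≠ 0 := by linarith
  field_simp
  ring
end

section
/- Let q, a, b be real numbers with q > 0 and a, b > 1, and let x ∈ (0,1). Define ψ(p) = ( Φ_{p,q}(a,b;x) / ((1+a)^p (1+b)^q) − x/(1−x) ) · (x−1)/(p x) for p > 0. Then ψ satisfies the Turán-type inequality ψ(p) ψ(p+2) − ψ(p+1)^2 ≥ 0 for all p ∈ (0,∞). -/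
open Set Filter

theorem sq_tsum_le_tsum_mul_tsum_of_sq_le_mul {ι : Type*} {r f g : ι → ℝ}
    (hf : ∀ i, 0 ≤ f i) (hg : ∀ i, 0 ≤ g i) (hrfg : ∀ i, r i ^ 2 ≤ f i * g i)
    (hfs : Summable f) (hgs : Summable g) :
    (∑' i, r i) ^ 2 ≤ (∑' i, f i) * ∑' i, g i := by
  have hrs : Summable r := by
    refine (hfs.add hgs).of_norm_bounded fun i => ?_
    rw [Real.norm_eq_abs]
    refine abs_le_of_sq_le_sq ((hrfg i).trans ?_) (add_nonneg (hf i) (hg i))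
    nlinarith [hf i, hg i]
  exact le_of_tendsto_of_tendsto' (hrs.hasSum.pow 2) (Tendsto.mul hfs.hasSum hgs.hasSum)
    fun s => s.sum_sq_le_sum_mul_sum_of_sq_le_mul (fun i _ => hf i) (fun i _ => hg i)
      fun i _ => hrfg i

theorem integral_rpow_mul_add_sq {p : ℝ} (hp : 0 < p) (l c d : ℝ) :
    ∫ t in c..d, (l ^ 2 * t ^ (p - 1) + 2 * l * t ^ p + t ^ (p + 1)) =
      l ^ 2 * ((d ^ p - c ^ p) / p) + 2 * l * ((d ^ (p + 1) - c ^ (p + 1)) / (p + 1)) +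
        (d ^ (p + 2) - c ^ (p + 2)) / (p + 2) := by
  have hintegrable : ∀ e : ℝ, 0 < e →
      IntervalIntegrable (fun t : ℝ => t ^ (e - 1)) MeasureTheory.volume c d :=
    fun e he => intervalIntegral.intervalIntegrable_rpow' (by linarith)
  have hI : ∀ e : ℝ, 0 < e → ∫ t in c..d, t ^ (e - 1) = (d ^ e - c ^ e) / e :=
    fun e he => by rw [integral_rpow (Or.inl (by linarith)), sub_add_cancel]
  have h1 := hintegrable (p + 1) (by linarith)
  have h2 := hintegrable (p + 2) (by linarith)
  simp only [add_sub_cancel_right, show p + 2 - 1 = p + 1 by ring] at h1 h2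
  rw [intervalIntegral.integral_add ((hintegrable p hp).const_mul _ |>.add (h1.const_mul _)) h2,
    intervalIntegral.integral_add ((hintegrable p hp).const_mul _) (h1.const_mul _),
    intervalIntegral.integral_const_mul, intervalIntegral.integral_const_mul, hI p hp,
    ← hI (p + 1) (by linarith), ← hI (p + 2) (by linarith), add_sub_cancel_right,
    show p + 2 - 1 = p + 1 by ring]

theorem integral_rpow_mul_add_sq_nonneg {p : ℝ} (hp : 0 < p) (l : ℝ) {c d : ℝ} (hc : 0 ≤ c)
    (hcd : c ≤ d) : 0 ≤ ∫ t in c..d, (l ^ 2 * t ^ (p - 1) + 2 * l * t ^ p + t ^ (p + 1)) := by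
  refine intervalIntegral.integral_nonneg hcd fun t ht => ?_
  have ht0 : 0 ≤ t := hc.trans ht.1
  have hp1 : t ^ p = t ^ (p - 1) * t := by
    rw [← Real.rpow_add_one' ht0 (by linarith), sub_add_cancel]
  have hp2 : t ^ (p + 1) = t ^ p * t := Real.rpow_add_one' ht0 (by linarith)
  rw [hp2, hp1, show ∀ u : ℝ, l ^ 2 * u + 2 * l * (u * t) + u * t * t = u * (l + t) ^ 2 from
    fun u => by ring]
  exact mul_nonneg (Real.rpow_nonneg ht0 _) (sq_nonneg _)

theorem sq_one_sub_mul_rpow_div_le {r s p : ℝ} (hr0 : 0 ≤ r) (hr1 : r ≤ 1) (hs : s ≤ 1)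
    (hp : 0 < p) :
    ((1 - s * r ^ (p + 1)) / (p + 1)) ^ 2 ≤
      ((1 - s * r ^ p) / p) * ((1 - s * r ^ (p + 2)) / (p + 2)) := by
  have hquad : ∀ l : ℝ, 0 ≤ (1 - s * r ^ p) / p * (l * l) +
      2 * ((1 - s * r ^ (p + 1)) / (p + 1)) * l + (1 - s * r ^ (p + 2)) / (p + 2) := by
    intro l
    have hlow := integral_rpow_mul_add_sq_nonneg hp l le_rfl hr0
    have hupp := integral_rpow_mul_add_sq_nonneg hp l hr0 hr1
    rw [integral_rpow_mul_add_sq hp] at hlow hupp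
    simp only [Real.zero_rpow (by linarith : p ≠ 0), Real.zero_rpow (by linarith : p + 1 ≠ 0),
      Real.zero_rpow (by linarith : p + 2 ≠ 0), Real.one_rpow, sub_zero] at hlow hupp
    linear_combination hupp + mul_nonneg (sub_nonneg.2 hs) hlow
  have := discrim_le_zero hquad
  rw [discrim] at this
  linarith

noncomputable def polylogCoeff (q a b p : ℝ) (k : ℕ) : ℝ :=
  ((k : ℝ) + 1 + b)⁻¹ ^ q * ((k : ℝ) + 1 + a)⁻¹ ^ p

noncomputable def psiTerm (q a b x p : ℝ) (k : ℕ) : ℝ :=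
  (1 - x) * x ^ k * ((1 - polylogCoeff q a b p k) / p)

section PsiSeries

variable {q a b x p : ℝ}

theorem inv_natCast_add_one_add_mem_Icc (ha : 0 ≤ a) (k : ℕ) :
    ((k : ℝ) + 1 + a)⁻¹ ∈ Icc (0 : ℝ) 1 :=
  ⟨by positivity, inv_le_one_of_one_le₀ (by linarith [k.cast_nonneg (α := ℝ)])⟩

theorem rpow_mem_Icc_of_mem_Icc {r e : ℝ} (hr : r ∈ Icc (0 : ℝ) 1) (he : 0 ≤ e) :
    r ^ e ∈ Icc (0 : ℝ) 1 :=
  ⟨Real.rpow_nonneg hr.1 e, Real.rpow_le_one hr.1 hr.2 he⟩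

theorem polylogCoeff_mem_Icc (ha : 0 ≤ a) (hb : 0 ≤ b) (hq : 0 ≤ q) (hp : 0 ≤ p) (k : ℕ) :
    polylogCoeff q a b p k ∈ Icc (0 : ℝ) 1 := by
  obtain ⟨hs0, hs1⟩ := rpow_mem_Icc_of_mem_Icc (inv_natCast_add_one_add_mem_Icc hb k) hq
  obtain ⟨hr0, hr1⟩ := rpow_mem_Icc_of_mem_Icc (inv_natCast_add_one_add_mem_Icc ha k) hp
  exact ⟨mul_nonneg hs0 hr0, mul_le_one₀ hs1 hr0 hr1⟩

theorem psiTerm_nonneg (hx0 : 0 ≤ x) (hx1 : x ≤ 1) (ha : 0 ≤ a) (hb : 0 ≤ b) (hq : 0 ≤ q)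
    (hp : 0 ≤ p) (k : ℕ) : 0 ≤ psiTerm q a b x p k := by
  have hc := polylogCoeff_mem_Icc ha hb hq hp k
  exact mul_nonneg (mul_nonneg (sub_nonneg.2 hx1) (pow_nonneg hx0 k))
    (div_nonneg (sub_nonneg.2 hc.2) hp)

theorem summable_psiTerm (hx0 : 0 ≤ x) (hx1 : x < 1) (ha : 0 ≤ a) (hb : 0 ≤ b) (hq : 0 ≤ q)
    (hp : 0 ≤ p) : Summable (psiTerm q a b x p) := by
  refine .of_nonneg_of_le (psiTerm_nonneg hx0 hx1.le ha hb hq hp) (fun k => ?_)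
    ((summable_geometric_of_lt_one hx0 hx1).mul_left ((1 - x) / p))
  have hc := polylogCoeff_mem_Icc ha hb hq hp k
  have hw : 0 ≤ (1 - x) * x ^ k := mul_nonneg (by linarith) (pow_nonneg hx0 k)
  calc psiTerm q a b x p k ≤ (1 - x) * x ^ k * (1 / p) :=
        mul_le_mul_of_nonneg_left (div_le_div_of_nonneg_right (by linarith [hc.1]) hp) hw
    _ = (1 - x) / p * x ^ k := by ring

theorem psiTerm_sq_le (ha : 0 ≤ a) (hb : 0 ≤ b) (hq : 0 ≤ q) (hp : 0 < p) (k : ℕ) :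
    psiTerm q a b x (p + 1) k ^ 2 ≤ psiTerm q a b x p k * psiTerm q a b x (p + 2) k := by
  obtain ⟨hr0, hr1⟩ := inv_natCast_add_one_add_mem_Icc ha k
  have hs := (rpow_mem_Icc_of_mem_Icc (inv_natCast_add_one_add_mem_Icc hb k) hq).2
  have hcoeff := sq_one_sub_mul_rpow_div_le hr0 hr1 hs hp
  have hmul : ∀ w A B C : ℝ, B ^ 2 ≤ A * C → (w * B) ^ 2 ≤ (w * A) * (w * C) :=
    fun w A B C h => by
      rw [mul_pow, show w * A * (w * C) = w ^ 2 * (A * C) by ring]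
      exact mul_le_mul_of_nonneg_left h (sq_nonneg w)
  exact hmul _ _ _ _ hcoeff

theorem psiFun_eq_tsum (hx : x ∈ Ioo (0 : ℝ) 1) (ha : 0 ≤ a) (hb : 0 ≤ b) (hq : 0 ≤ q)
    (hp : 0 ≤ p) : psiFun q a b x p = ∑' k, psiTerm q a b x p k := by
  obtain ⟨hx0, hx1⟩ := hx
  have hgeom := summable_geometric_of_lt_one hx0.le hx1
  have hcoeff : Summable fun k => polylogCoeff q a b p k * x ^ k := by
    refine .of_nonneg_of_le (fun k => ?_) (fun k => ?_) hgeom <;>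
      have hc := polylogCoeff_mem_Icc ha hb hq hp k
    · exact mul_nonneg hc.1 (pow_nonneg hx0.le k)
    · exact mul_le_of_le_one_left (pow_nonneg hx0.le k) hc.2
  have hpolylog : genPolylogR p q a b x =
      (1 + a) ^ p * (1 + b) ^ q * x * ∑' k, polylogCoeff q a b p k * x ^ k := by
    rw [genPolylogR, ← tsum_mul_left]
    congr 1 with k
    rw [polylogCoeff, Real.inv_rpow (by positivity), Real.inv_rpow (by positivity)]
    field_simp
    ring
  have hpsi : ∑' k, psiTerm q a b x p k =
      (1 - x) / p * ∑' k, (x ^ k - polylogCoeff q a b p k * x ^ k) := by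
    rw [← tsum_mul_left]
    congr 1 with k
    rw [psiTerm]
    ring
  rw [hpsi, hgeom.tsum_sub hcoeff, tsum_geometric_of_lt_one hx0.le hx1, psiFun, hpolylog]
  have : 1 - x ≠ 0 := by linarith
  field_simp
  ring

end PsiSeries

theorem psi_turan_inequality
    (q a b x : ℝ) (hq : 0 < q) (ha : 1 < a) (hb : 1 < b) (hx : x ∈ Set.Ioo (0 : ℝ) 1) :
    ∀ p : ℝ, 0 < p →
      0 ≤ psiFun q a b x p * psiFun q a b x (p + 2) - (psiFun q a b x (p + 1)) ^ 2 := by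
  intro p hp
  have ha0 : 0 ≤ a := by linarith
  have hb0 : 0 ≤ b := by linarith
  have hp2 : 0 ≤ p + 2 := by linarith
  rw [psiFun_eq_tsum hx ha0 hb0 hq.le hp.le, psiFun_eq_tsum hx ha0 hb0 hq.le hp2,
    psiFun_eq_tsum hx ha0 hb0 hq.le (by linarith)]
  have := sq_tsum_le_tsum_mul_tsum_of_sq_le_mul
    (psiTerm_nonneg hx.1.le hx.2.le ha0 hb0 hq.le hp.le)
    (psiTerm_nonneg hx.1.le hx.2.le ha0 hb0 hq.le hp2) (psiTerm_sq_le ha0 hb0 hq.le hp)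
    (summable_psiTerm hx.1.le hx.2 ha0 hb0 hq.le hp.le)
    (summable_psiTerm hx.1.le hx.2 ha0 hb0 hq.le hp2)
  linarith
end

section
/- Let a, b, p, q be positive real numbers and x ∈ (0,1). Then the generalized polylogarithm satisfies the Turán-type inequality Φ_{p,q}(a,b;x) · Φ_{p,q+2}(a,b;x) − Φ_{p,q+1}(a,b;x)^2 ≥ 0. -/
/-!
The `k`-th term of `Φ_{p,s}(a,b;x)` is `coeff k * ratio k ^ s` with `coeff k ≥ 0` and
`ratio k = (1 + b) / (k + 1 + b) ∈ (0, 1]`. Being log-linear in `s`, the `q + 1` term is the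
geometric mean of the `q` and `q + 2` terms, and the Cauchy–Schwarz inequality for series
finishes the proof.
-/

open Finset

theorem tsum_sq_le_tsum_mul_tsum_of_sq_le_mul {ι : Type*} {r f g : ι → ℝ}
    (hf : ∀ i, 0 ≤ f i) (hg : ∀ i, 0 ≤ g i) (hfs : Summable f) (hgs : Summable g)
    (ht : ∀ i, r i ^ 2 ≤ f i * g i) :
    (∑' i, r i) ^ 2 ≤ (∑' i, f i) * ∑' i, g i := by
  by_cases hr : Summable r
  · refine le_of_tendsto' (hr.hasSum.pow 2) fun s => ?_
    calc (∑ i ∈ s, r i) ^ 2 ≤ (∑ i ∈ s, f i) * ∑ i ∈ s, g i :=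
          sum_sq_le_sum_mul_sum_of_sq_le_mul s (fun i _ => hf i) (fun i _ => hg i)
            (fun i _ => ht i)
      _ ≤ (∑' i, f i) * ∑' i, g i :=
          mul_le_mul (hfs.sum_le_tsum s fun i _ => hf i) (hgs.sum_le_tsum s fun i _ => hg i)
            (sum_nonneg fun i _ => hg i) (tsum_nonneg hf)
  · rw [tsum_eq_zero_of_not_summable hr, zero_pow two_ne_zero]
    exact mul_nonneg (tsum_nonneg hf) (tsum_nonneg hg)

theorem sq_mul_rpow_add_one {c r : ℝ} (hr : 0 < r) (q : ℝ) :
    (c * r ^ (q + 1)) ^ 2 = c * r ^ q * (c * r ^ (q + 2)) := by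
  have hsplit : r ^ (q + 1) * r ^ (q + 1) = r ^ q * r ^ (q + 2) := by
    rw [← Real.rpow_add hr, ← Real.rpow_add hr]
    ring_nf
  linear_combination c ^ 2 * hsplit

namespace GenPolylog

noncomputable def coeff (p a x : ℝ) (k : ℕ) : ℝ :=
  ((1 + a) / ((k : ℝ) + 1 + a)) ^ p * x ^ (k + 1)

noncomputable def ratio (b : ℝ) (k : ℕ) : ℝ :=
  (1 + b) / ((k : ℝ) + 1 + b)

variable {a b x : ℝ}

theorem ratio_pos (hb : -1 < b) (k : ℕ) : 0 < ratio b k :=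
  div_pos (by linarith) (by linarith [k.cast_nonneg (α := ℝ)])

theorem ratio_le_one (hb : -1 < b) (k : ℕ) : ratio b k ≤ 1 :=
  div_le_one_of_le₀ (by simp) (by linarith [k.cast_nonneg (α := ℝ)])

theorem coeff_nonneg (ha : -1 < a) (hx : 0 ≤ x) (p : ℝ) (k : ℕ) : 0 ≤ coeff p a x k :=
  mul_nonneg (Real.rpow_nonneg (ratio_pos ha k).le p) (pow_nonneg hx _)

theorem coeff_le_pow (ha : -1 < a) (hx : 0 ≤ x) {p : ℝ} (hp : 0 ≤ p) (k : ℕ) :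
    coeff p a x k ≤ x ^ (k + 1) :=
  mul_le_of_le_one_left (pow_nonneg hx _)
    (Real.rpow_le_one (ratio_pos ha k).le (ratio_le_one ha k) hp)

theorem coeff_mul_ratio_rpow_nonneg (ha : -1 < a) (hb : -1 < b) (hx : 0 ≤ x) (p s : ℝ) (k : ℕ) :
    0 ≤ coeff p a x k * ratio b k ^ s :=
  mul_nonneg (coeff_nonneg ha hx p k) (Real.rpow_nonneg (ratio_pos hb k).le s)

theorem summable_coeff_mul_ratio_rpow (ha : -1 < a) (hb : -1 < b) (hx0 : 0 ≤ x) (hx1 : x < 1)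
    {p s : ℝ} (hp : 0 ≤ p) (hs : 0 ≤ s) :
    Summable fun k => coeff p a x k * ratio b k ^ s := by
  refine Summable.of_nonneg_of_le (coeff_mul_ratio_rpow_nonneg ha hb hx0 p s) (fun k => ?_)
    ((summable_geometric_of_lt_one hx0 hx1).mul_left x)
  calc coeff p a x k * ratio b k ^ s ≤ x ^ (k + 1) * 1 :=
        mul_le_mul (coeff_le_pow ha hx0 hp k)
          (Real.rpow_le_one (ratio_pos hb k).le (ratio_le_one hb k) hs)
          (Real.rpow_nonneg (ratio_pos hb k).le s) (pow_nonneg hx0 _)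
    _ = x * x ^ k := by ring

theorem genPolylogR_eq_tsum (ha : -1 < a) (hb : -1 < b) (p s : ℝ) :
    genPolylogR p s a b x = ∑' k, coeff p a x k * ratio b k ^ s := by
  refine tsum_congr fun k => ?_
  have hak : 0 ≤ (k : ℝ) + 1 + a := by linarith [k.cast_nonneg (α := ℝ)]
  have hbk : 0 ≤ (k : ℝ) + 1 + b := by linarith [k.cast_nonneg (α := ℝ)]
  rw [coeff, ratio, Real.div_rpow (by linarith) hak, Real.div_rpow (by linarith) hbk]
  ring

end GenPolylog

open GenPolylog in
theorem generalized_polylog_turan_q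
    (a b p q : ℝ) (ha : 0 < a) (hb : 0 < b) (hp : 0 < p) (hq : 0 < q)
    (x : ℝ) (hx : x ∈ Set.Ioo (0 : ℝ) 1) :
    0 ≤ genPolylogR p q a b x * genPolylogR p (q + 2) a b x -
          (genPolylogR p (q + 1) a b x) ^ 2 := by
  obtain ⟨hx0, hx1⟩ := hx
  have ha' : -1 < a := by linarith
  have hb' : -1 < b := by linarith
  have hturan := tsum_sq_le_tsum_mul_tsum_of_sq_le_mul
    (coeff_mul_ratio_rpow_nonneg ha' hb' hx0.le p q)
    (coeff_mul_ratio_rpow_nonneg ha' hb' hx0.le p (q + 2))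
    (summable_coeff_mul_ratio_rpow ha' hb' hx0.le hx1 hp.le hq.le)
    (summable_coeff_mul_ratio_rpow ha' hb' hx0.le hx1 hp.le (by linarith))
    (fun k => (sq_mul_rpow_add_one (ratio_pos hb' k) q).le)
  rw [genPolylogR_eq_tsum ha' hb', genPolylogR_eq_tsum ha' hb', genPolylogR_eq_tsum ha' hb']
  linarith
end

section
/- Let a, b, p, q be positive real numbers. For integers n ≥ 0 and 0 ≤ k ≤ n define f(n,k) = (2k − n) / ( (k+1+a)^p (n−k+1+a)^p (k+1+b)^{q+1} (n−k+1+b)^{q+2} ). Then for every nonnegative integer n, Σ_{k=0}^{n} f(n,k) ≥ 0. -/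
/-!
Pair the terms `k` and `n - k`. With `x = k`, `y = n - k`, the two terms share the symmetric factor
`W = (x+1+a)^p (y+1+a)^p (x+1+b)^(q+1) (y+1+b)^(q+1)`, and with `s = x+1+b`, `t = y+1+b` their sum is
`(s - t) / (W t) + (t - s) / (W s) = (s - t)^2 / (W s t) ≥ 0`. Summing over `k` counts every term twice.
-/

open Real Finset

lemma sum_range_nonneg_of_add_reflect_nonneg {M : Type*} [AddCommGroup M] [LinearOrder M]
    [IsOrderedAddMonoid M] (f : ℕ → M) (n : ℕ) (h : ∀ k ≤ n, 0 ≤ f k + f (n - k)) :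
    0 ≤ ∑ k ∈ range (n + 1), f k := by
  have hreflect : ∑ k ∈ range (n + 1), f (n - k) = ∑ k ∈ range (n + 1), f k := by
    simpa using sum_range_reflect f (n + 1)
  have htwice : 0 ≤ ∑ k ∈ range (n + 1), f k + ∑ k ∈ range (n + 1), f k :=
    calc 0 ≤ ∑ k ∈ range (n + 1), (f k + f (n - k)) :=
          sum_nonneg fun k hk => h k (Nat.lt_succ_iff.mp (mem_range.mp hk))
      _ = _ := by rw [sum_add_distrib, hreflect]
  exact le_of_not_gt fun hneg => (add_neg hneg hneg).not_ge htwice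

lemma sub_div_mul_add_sub_div_mul_nonneg {W s t : ℝ} (hW : 0 < W) (hs : 0 < s) (ht : 0 < t) :
    0 ≤ (s - t) / (W * t) + (t - s) / (W * s) := by
  have hsum : (s - t) / (W * t) + (t - s) / (W * s) = (s - t) ^ 2 / (W * s * t) := by
    field_simp
    ring
  rw [hsum]
  positivity

lemma turan_term_add_reflect_nonneg {a b x y : ℝ} (p q : ℝ) (ha : 0 < a) (hb : 0 < b)
    (hx : 0 ≤ x) (hy : 0 ≤ y) :
    0 ≤ (x - y) / ((x + 1 + a) ^ p * (y + 1 + a) ^ p * (x + 1 + b) ^ (q + 1) * (y + 1 + b) ^ (q + 2))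
      + (y - x) / ((y + 1 + a) ^ p * (x + 1 + a) ^ p * (y + 1 + b) ^ (q + 1) * (x + 1 + b) ^ (q + 2)) := by
  have hxb : 0 < x + 1 + b := by positivity
  have hyb : 0 < y + 1 + b := by positivity
  have hq : q + 2 = q + 1 + 1 := by ring
  rw [hq, rpow_add_one hxb.ne' (q + 1), rpow_add_one hyb.ne' (q + 1)]
  convert sub_div_mul_add_sub_div_mul_nonneg (W := (x + 1 + a) ^ p * (y + 1 + a) ^ p *
      (x + 1 + b) ^ (q + 1) * (y + 1 + b) ^ (q + 1)) (by positivity) hxb hyb using 2 <;> ring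

theorem turan_coefficient_sum_nonneg_general
    (a b p q : ℝ) (ha : 0 < a) (hb : 0 < b) :
    ∀ n : ℕ,
      0 ≤ ∑ k ∈ Finset.range (n + 1),
        (2 * (k : ℝ) - (n : ℝ)) /
          (((k : ℝ) + 1 + a) ^ p * ((n : ℝ) - (k : ℝ) + 1 + a) ^ p *
            ((k : ℝ) + 1 + b) ^ (q + 1) * ((n : ℝ) - (k : ℝ) + 1 + b) ^ (q + 2)) := by
  intro n
  refine sum_range_nonneg_of_add_reflect_nonneg _ n fun k hk => ?_
  have hkn : (k : ℝ) ≤ n := by exact_mod_cast hk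
  have hfirst : 2 * (k : ℝ) - n = k - (n - k) := by ring
  have hsecond : 2 * (n - k : ℝ) - n = (n - k) - k := by ring
  rw [Nat.cast_sub hk, sub_sub_cancel, hfirst, hsecond]
  exact turan_term_add_reflect_nonneg p q ha hb (Nat.cast_nonneg k) (sub_nonneg.mpr hkn)

theorem turan_coefficient_sum_nonneg
    (a b p q : ℝ) (ha : 0 < a) (hb : 0 < b) (hp : 0 < p) (hq : 0 < q) :
    ∀ n : ℕ,
      0 ≤ ∑ k ∈ Finset.range (n + 1),
        (2 * (k : ℝ) - (n : ℝ)) /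
          (((k : ℝ) + 1 + a) ^ p * ((n : ℝ) - (k : ℝ) + 1 + a) ^ p *
            ((k : ℝ) + 1 + b) ^ (q + 1) * ((n : ℝ) - (k : ℝ) + 1 + b) ^ (q + 2)) :=
  turan_coefficient_sum_nonneg_general a b p q ha hb
end

section
/- Let p, q, a, b be complex numbers with positive real parts (in particular one may take a, b positive reals). Then for every complex z with |z| < 1, Φ_{p,q}(a,b;z) = ((1+a)^p (1+b)^q / (Γ(p) Γ(q))) ∫_0^1 ∫_0^1 z (log(1/u))^{p−1} (log(1/v))^{q−1} u^a v^b / (1 − u v z) du dv. -/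
/-!
Expanding `1 / (1 - u v z)` as a geometric series and integrating term by term reduces the
double integral to the Euler integrals
`∫₀¹ v ^ (w + k) (log (1 / v)) ^ (s - 1) dv = Γ(s) / (w + k + 1) ^ s`.
The substitution `v = exp (-t)` turns these into the Laplace transform
`∫₀^∞ t ^ (s - 1) exp (-c t) dt = Γ(s) / c ^ s`, known for real `c > 0` and extended to `0 < Re c`
by analytic continuation in `c`. Since `‖v ^ k‖ ≤ 1` on `(0, 1)`, both series are dominated by a
summable multiple of the integrable `‖v ^ w (log (1 / v)) ^ (s - 1)‖`; the same bound shows that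
`Γ(s) / (w + k + 1) ^ s` stays bounded in `k`.
-/

open MeasureTheory

/-- The generalized polylogarithm `Φ_{p,q}(a,b;z)` with complex parameters. -/
noncomputable def genPolylogC (p q a b z : ℂ) : ℂ :=
  ∑' k : ℕ, ((1 + a) ^ p * (1 + b) ^ q /
      (((k : ℂ) + 1 + a) ^ p * ((k : ℂ) + 1 + b) ^ q)) * z ^ (k + 1)

open Set Filter Topology Complex

lemma norm_cpow_mul_exp_neg_mul {s c : ℂ} {t : ℝ} (ht : 0 < t) :
    ‖(t : ℂ) ^ (s - 1) * cexp (-(c * t))‖ = t ^ (s.re - 1) * Real.exp (-(c.re * t)) := by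
  rw [norm_mul, norm_exp, norm_cpow_eq_rpow_re_of_pos ht]
  simp [mul_re]

lemma aestronglyMeasurable_cpow_mul_exp_neg_mul (s c : ℂ) :
    AEStronglyMeasurable (fun t : ℝ => (t : ℂ) ^ (s - 1) * cexp (-(c * t)))
      (volume.restrict (Ioi 0)) :=
  ContinuousOn.aestronglyMeasurable
    (fun t ht => ((continuousAt_ofReal_cpow_const t _ (Or.inr (ne_of_gt ht))).mul
      (by fun_prop)).continuousWithinAt) measurableSet_Ioi

lemma integrableOn_rpow_mul_exp_neg_mul {s b : ℝ} (hs : 0 < s) (hb : 0 < b) :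
    IntegrableOn (fun t : ℝ => t ^ (s - 1) * Real.exp (-(b * t))) (Ioi 0) := by
  simpa using integrableOn_rpow_mul_exp_neg_mul_rpow (p := 1) (by linarith) zero_lt_one hb

lemma integrableOn_cpow_mul_exp_neg_mul {s c : ℂ} (hs : 0 < s.re) (hc : 0 < c.re) :
    IntegrableOn (fun t : ℝ => (t : ℂ) ^ (s - 1) * cexp (-(c * t))) (Ioi 0) := by
  refine (integrableOn_rpow_mul_exp_neg_mul hs hc).mono'
    (aestronglyMeasurable_cpow_mul_exp_neg_mul s c) ?_
  filter_upwards [ae_restrict_mem measurableSet_Ioi] with t ht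
  exact (norm_cpow_mul_exp_neg_mul ht).le

lemma differentiableOn_integral_cpow_mul_exp_neg_mul {s : ℂ} (hs : 0 < s.re) :
    DifferentiableOn ℂ (fun c : ℂ => ∫ t in Ioi (0 : ℝ), (t : ℂ) ^ (s - 1) * cexp (-(c * t)))
      {c | 0 < c.re} := by
  intro c₀ hc₀
  have hε : 0 < c₀.re / 2 := half_pos hc₀
  have hball : ∀ c ∈ Metric.ball c₀ (c₀.re / 2), c₀.re / 2 < c.re := fun c hc => by
    have := (abs_re_le_norm (c - c₀)).trans_lt (mem_ball_iff_norm.1 hc)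
    rw [sub_re, abs_lt] at this
    linarith
  have hderiv : ∀ t : ℝ, 0 < t → ∀ c : ℂ,
      HasDerivAt (fun c : ℂ => (t : ℂ) ^ (s - 1) * cexp (-(c * t)))
        (-((t : ℂ) ^ (s + 1 - 1) * cexp (-(c * t)))) c := fun t ht c => by
    have hexp : HasDerivAt (fun c : ℂ => -(c * t)) (-t) c := by
      simpa only [mul_neg] using hasDerivAt_mul_const (x := c) (-(t : ℂ))
    rw [show s + 1 - 1 = s - 1 + 1 by ring, cpow_add _ _ (ofReal_ne_zero.2 ht.ne'), cpow_one]
    exact (hexp.cexp.const_mul ((t : ℂ) ^ (s - 1))).congr_deriv (by ring)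
  have key := hasDerivAt_integral_of_dominated_loc_of_deriv_le
    (F' := fun c (t : ℝ) => -((t : ℂ) ^ (s + 1 - 1) * cexp (-(c * t))))
    (bound := fun t : ℝ => t ^ ((s + 1).re - 1) * Real.exp (-(c₀.re / 2 * t)))
    (Metric.ball_mem_nhds c₀ hε)
    (Eventually.of_forall fun c => aestronglyMeasurable_cpow_mul_exp_neg_mul s c)
    (integrableOn_cpow_mul_exp_neg_mul hs hc₀)
    (aestronglyMeasurable_cpow_mul_exp_neg_mul (s + 1) c₀).neg ?_
    (integrableOn_rpow_mul_exp_neg_mul (by rw [add_re, one_re]; linarith) hε) ?_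
  · exact key.2.differentiableAt.differentiableWithinAt
  · filter_upwards [ae_restrict_mem measurableSet_Ioi] with t ht c hc
    rw [norm_neg, norm_cpow_mul_exp_neg_mul ht]
    refine mul_le_mul_of_nonneg_left (Real.exp_le_exp.2 ?_) (Real.rpow_nonneg (le_of_lt ht) _)
    nlinarith [hball c hc, mem_Ioi.1 ht]
  · filter_upwards [ae_restrict_mem measurableSet_Ioi] with t ht c _
    exact hderiv t ht c

theorem integral_cpow_mul_exp_neg_mul_Ioi_of_re_pos {a r : ℂ} (ha : 0 < a.re) (hr : 0 < r.re) :
    ∫ t in Ioi (0 : ℝ), (t : ℂ) ^ (a - 1) * cexp (-(r * t)) = (1 / r) ^ a * Gamma a := by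
  have hU : IsOpen {c : ℂ | 0 < c.re} := isOpen_lt continuous_const continuous_re
  have hrhs : DifferentiableOn ℂ (fun c : ℂ => (1 / c) ^ a * Gamma a) {c | 0 < c.re} :=
    fun c hc => by
      have hc0 : c ≠ 0 := fun h => by simp [h] at hc
      refine (((differentiableAt_const 1).div differentiableAt_id hc0).cpow_const ?_).mul_const
        _ |>.differentiableWithinAt
      show 1 / c ∈ slitPlane
      rw [mem_slitPlane_iff, one_div, inv_re]
      exact Or.inl (div_pos hc (normSq_pos.2 hc0))
  have hreal : Tendsto ((↑) : ℝ → ℂ) (𝓝[≠] 1) (𝓝[≠] 1) := by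
    rw [tendsto_nhdsWithin_iff]; constructor
    · exact tendsto_nhdsWithin_of_tendsto_nhds continuous_ofReal.continuousAt
    · exact eventually_nhdsWithin_iff.mpr (Eventually.of_forall fun t ht => ofReal_ne_one.mpr ht)
  have hlhs := (differentiableOn_integral_cpow_mul_exp_neg_mul ha).analyticOnNhd hU
  refine hlhs.eqOn_of_preconnected_of_frequently_eq (hrhs.analyticOnNhd hU)
    (convex_halfSpace_re_gt 0).isPreconnected (by simp : (1 : ℂ) ∈ _) (hreal.frequently ?_) hr
  refine ((eventually_gt_nhds zero_lt_one).filter_mono nhdsWithin_le_nhds).frequently.mono ?_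
  exact fun x hx => integral_cpow_mul_exp_neg_mul_Ioi ha hx

lemma image_exp_neg_Ioi : (fun t : ℝ => Real.exp (-t)) '' Ioi 0 = Ioo 0 1 := by
  rw [show (fun t : ℝ => Real.exp (-t)) = Real.exp ∘ Neg.neg from rfl, image_comp, image_neg_Ioi,
    neg_zero, Real.image_exp_Iio, Real.exp_zero]

lemma integral_Ioo_zero_one_eq_integral_Ioi_exp_neg {E : Type*} [NormedAddCommGroup E]
    [NormedSpace ℝ E] (g : ℝ → E) :
    ∫ v in Ioo (0 : ℝ) 1, g v = ∫ t in Ioi (0 : ℝ), Real.exp (-t) • g (Real.exp (-t)) := by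
  rw [← image_exp_neg_Ioi, integral_image_eq_integral_abs_deriv_smul (f := fun t => Real.exp (-t))
    measurableSet_Ioi
    (fun t _ => by simpa using ((hasDerivAt_neg t).exp).hasDerivWithinAt)
    (Real.exp_injective.comp neg_injective).injOn g]
  simp only [abs_neg, Real.abs_exp]

lemma integrableOn_Ioo_zero_one_iff_integrableOn_Ioi_exp_neg {E : Type*}
    [NormedAddCommGroup E] [NormedSpace ℝ E] (g : ℝ → E) :
    IntegrableOn g (Ioo (0 : ℝ) 1) ↔
      IntegrableOn (fun t => Real.exp (-t) • g (Real.exp (-t))) (Ioi (0 : ℝ)) := by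
  rw [← image_exp_neg_Ioi,
    integrableOn_image_iff_integrableOn_abs_deriv_smul (f := fun t => Real.exp (-t))
    measurableSet_Ioi
    (fun t _ => by simpa using ((hasDerivAt_neg t).exp).hasDerivWithinAt)
    (Real.exp_injective.comp neg_injective).injOn g]
  simp only [abs_neg, Real.abs_exp]

lemma exp_neg_smul_cpow_mul_log_one_div_cpow (w s : ℂ) (t : ℝ) :
    Real.exp (-t) • ((Real.exp (-t) : ℂ) ^ w * (Real.log (1 / Real.exp (-t)) : ℂ) ^ (s - 1)) =
      (t : ℂ) ^ (s - 1) * cexp (-((w + 1) * t)) := by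
  rw [one_div, Real.log_inv, Real.log_exp, neg_neg, ofReal_exp,
    cpow_def_of_ne_zero (exp_ne_zero _),
    log_exp (by simp [Real.pi_pos]) (by simp [Real.pi_pos.le]), real_smul, ofReal_exp,
    ← mul_assoc, ← Complex.exp_add]
  push_cast
  rw [mul_comm, show -(t : ℂ) + -t * w = -((w + 1) * t) by ring]

theorem integral_mul_tsum_of_norm_le_one {α 𝕜 : Type*} [MeasurableSpace α] [RCLike 𝕜]
    {μ : Measure α} {g : α → 𝕜} {f : ℕ → α → 𝕜} {c : ℕ → 𝕜} (hg : Integrable g μ)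
    (hf : ∀ k, AEStronglyMeasurable (f k) μ) (hf_le : ∀ k, ∀ᵐ x ∂μ, ‖f k x‖ ≤ 1)
    (hc : Summable fun k => ‖c k‖) :
    ∫ x, g x * ∑' k, c k * f k x ∂μ = ∑' k, c k * ∫ x, f k x * g x ∂μ := by
  have hint : ∀ k, Integrable (fun x => c k * (f k x * g x)) μ := fun k =>
    (hg.bdd_mul (hf k) (hf_le k)).const_mul _
  have hnorm : ∀ k, ∫ x, ‖c k * (f k x * g x)‖ ∂μ ≤ ‖c k‖ * ∫ x, ‖g x‖ ∂μ := fun k => by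
    rw [← integral_const_mul]
    refine integral_mono_of_nonneg (ae_of_all _ fun _ => norm_nonneg _) (hg.norm.const_mul _) ?_
    filter_upwards [hf_le k] with x hx
    rw [norm_mul, norm_mul]
    exact mul_le_mul_of_nonneg_left (mul_le_of_le_one_left (norm_nonneg _) hx) (norm_nonneg _)
  have hsum : Summable fun k => ∫ x, ‖c k * (f k x * g x)‖ ∂μ :=
    (hc.mul_right _).of_nonneg_of_le (fun k => integral_nonneg fun _ => norm_nonneg _) hnorm
  calc ∫ x, g x * ∑' k, c k * f k x ∂μ = ∫ x, ∑' k, c k * (f k x * g x) ∂μ := by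
        congr with x
        rw [mul_comm, ← tsum_mul_right]
        simp only [mul_assoc]
    _ = ∑' k, ∫ x, c k * (f k x * g x) ∂μ :=
        (integral_tsum_of_summable_integral_norm hint hsum).symm
    _ = ∑' k, c k * ∫ x, f k x * g x ∂μ := by simp only [integral_const_mul]

lemma norm_ofReal_pow_le_one {v : ℝ} (hv : v ∈ Ioo (0 : ℝ) 1) (k : ℕ) : ‖(v : ℂ) ^ k‖ ≤ 1 := by
  rw [norm_pow, norm_real, Real.norm_of_nonneg hv.1.le]
  exact pow_le_one₀ hv.1.le hv.2.le

lemma norm_ofReal_mul_lt_one {x : ℝ} (hx : x ∈ Ioo (0 : ℝ) 1) {z : ℂ} (hz : ‖z‖ < 1) :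
    ‖(x : ℂ) * z‖ < 1 := by
  rw [norm_mul, norm_real, Real.norm_of_nonneg hx.1.le]
  exact (mul_le_of_le_one_left (norm_nonneg z) hx.2.le).trans_lt hz

section

variable {w s : ℂ}

lemma integrableOn_cpow_mul_log_one_div_cpow (hw : -1 < w.re) (hs : 0 < s.re) :
    IntegrableOn (fun v : ℝ => (v : ℂ) ^ w * (Real.log (1 / v) : ℂ) ^ (s - 1)) (Ioo 0 1) := by
  rw [integrableOn_Ioo_zero_one_iff_integrableOn_Ioi_exp_neg]
  simp only [exp_neg_smul_cpow_mul_log_one_div_cpow]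
  exact integrableOn_cpow_mul_exp_neg_mul hs (by rw [add_re, one_re]; linarith)

lemma integral_cpow_mul_log_one_div_cpow (hw : -1 < w.re) (hs : 0 < s.re) :
    ∫ v in Ioo (0 : ℝ) 1, (v : ℂ) ^ w * (Real.log (1 / v) : ℂ) ^ (s - 1) =
      (1 / (w + 1)) ^ s * Gamma s := by
  rw [integral_Ioo_zero_one_eq_integral_Ioi_exp_neg]
  simp only [exp_neg_smul_cpow_mul_log_one_div_cpow]
  exact integral_cpow_mul_exp_neg_mul_Ioi_of_re_pos hs (by rw [add_re, one_re]; linarith)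

lemma integral_pow_mul_cpow_mul_log_one_div_cpow (hw : -1 < w.re) (hs : 0 < s.re) (k : ℕ) :
    ∫ v in Ioo (0 : ℝ) 1, (v : ℂ) ^ k * ((v : ℂ) ^ w * (Real.log (1 / v) : ℂ) ^ (s - 1)) =
      (1 / (w + k + 1)) ^ s * Gamma s := by
  have hwk : -1 < (w + k).re := by
    rw [add_re, natCast_re]
    linarith [k.cast_nonneg (α := ℝ)]
  rw [← integral_cpow_mul_log_one_div_cpow hwk hs]
  refine setIntegral_congr_fun measurableSet_Ioo fun v hv => ?_
  rw [cpow_add _ _ (ofReal_ne_zero.2 hv.1.ne'), cpow_natCast]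
  ring

lemma norm_one_div_cpow_mul_Gamma_le (hw : -1 < w.re) (hs : 0 < s.re) (k : ℕ) :
    ‖(1 / (w + k + 1)) ^ s * Gamma s‖ ≤
      ∫ v in Ioo (0 : ℝ) 1, ‖(v : ℂ) ^ w * (Real.log (1 / v) : ℂ) ^ (s - 1)‖ := by
  rw [← integral_pow_mul_cpow_mul_log_one_div_cpow hw hs k]
  refine norm_integral_le_of_norm_le (integrableOn_cpow_mul_log_one_div_cpow hw hs).norm ?_
  filter_upwards [ae_restrict_mem measurableSet_Ioo] with v hv
  rw [norm_mul]
  exact mul_le_of_le_one_left (norm_nonneg _) (norm_ofReal_pow_le_one hv k)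

theorem integral_cpow_mul_log_one_div_cpow_mul_tsum (hw : -1 < w.re) (hs : 0 < s.re)
    {c : ℕ → ℂ} (hc : Summable fun k => ‖c k‖) :
    ∫ v in Ioo (0 : ℝ) 1,
        (v : ℂ) ^ w * (Real.log (1 / v) : ℂ) ^ (s - 1) * ∑' k, c k * (v : ℂ) ^ k =
      ∑' k, c k * ((1 / (w + k + 1)) ^ s * Gamma s) := by
  rw [integral_mul_tsum_of_norm_le_one (f := fun k (v : ℝ) => (v : ℂ) ^ k)
    (integrableOn_cpow_mul_log_one_div_cpow hw hs)
    (fun k => (continuous_ofReal.pow k).aestronglyMeasurable) (fun k => ?_) hc]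
  · simp only [integral_pow_mul_cpow_mul_log_one_div_cpow hw hs]
  · filter_upwards [ae_restrict_mem measurableSet_Ioo] with v hv
    exact norm_ofReal_pow_le_one hv k

theorem integral_cpow_mul_log_one_div_cpow_div_one_sub_mul (hw : -1 < w.re) (hs : 0 < s.re)
    {x : ℂ} (hx : ‖x‖ < 1) :
    ∫ v in Ioo (0 : ℝ) 1, (v : ℂ) ^ w * (Real.log (1 / v) : ℂ) ^ (s - 1) / (1 - v * x) =
      ∑' k : ℕ, x ^ k * ((1 / (w + k + 1)) ^ s * Gamma s) := by
  have hx' : Summable fun k => ‖x ^ k‖ := by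
    simpa only [norm_pow] using summable_geometric_of_lt_one (norm_nonneg _) hx
  rw [← integral_cpow_mul_log_one_div_cpow_mul_tsum hw hs hx']
  refine setIntegral_congr_fun measurableSet_Ioo fun v hv => ?_
  rw [div_eq_mul_inv, ← tsum_geometric_of_norm_lt_one (norm_ofReal_mul_lt_one hv hx)]
  simp only [mul_pow, mul_comm]

lemma summable_norm_pow_mul_one_div_cpow_mul_Gamma (hw : -1 < w.re) (hs : 0 < s.re) {z : ℂ}
    (hz : ‖z‖ < 1) : Summable fun k : ℕ => ‖z ^ k * ((1 / (w + k + 1)) ^ s * Gamma s)‖ :=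
  ((summable_geometric_of_lt_one (norm_nonneg z) hz).mul_right _).of_nonneg_of_le
    (fun _ => norm_nonneg _) fun k => by
      rw [norm_mul, norm_pow]
      exact mul_le_mul_of_nonneg_left (norm_one_div_cpow_mul_Gamma_le hw hs k) (by positivity)

end

lemma one_div_cpow_of_re_pos {w : ℂ} (hw : 0 < w.re) (s : ℂ) : (1 / w) ^ s = 1 / w ^ s := by
  rw [one_div, one_div, inv_cpow _ _ fun h => by linarith [(arg_eq_pi_iff.1 h).1]]

lemma genPolylogC_eq_mul_tsum_one_div_cpow_mul_Gamma {p q a b : ℂ} (hp : 0 < p.re)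
    (hq : 0 < q.re) (ha : 0 < a.re) (hb : 0 < b.re) (z : ℂ) :
    genPolylogC p q a b z = (1 + a) ^ p * (1 + b) ^ q / (Gamma p * Gamma q) *
      (z * ∑' k : ℕ,
        z ^ k * ((1 / (b + k + 1)) ^ q * Gamma q) * ((1 / (a + k + 1)) ^ p * Gamma p)) := by
  rw [genPolylogC, ← tsum_mul_left, ← tsum_mul_left]
  refine tsum_congr fun k => ?_
  have hk : ∀ w : ℂ, 0 < w.re → 0 < ((k : ℂ) + 1 + w).re := fun w hw => by
    simp only [add_re, natCast_re, one_re]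
    positivity
  have hpow : ∀ w s : ℂ, 0 < w.re → ((k : ℂ) + 1 + w) ^ s ≠ 0 := fun w s hw h =>
    (hk w hw).ne' (by rw [((cpow_eq_zero_iff _ _).1 h).1, zero_re])
  rw [show a + k + 1 = k + 1 + a by ring, show b + k + 1 = k + 1 + b by ring,
    one_div_cpow_of_re_pos (hk a ha), one_div_cpow_of_re_pos (hk b hb)]
  field_simp [hpow a p ha, hpow b q hb, Gamma_ne_zero_of_re_pos hp, Gamma_ne_zero_of_re_pos hq]
  ring

theorem generalized_polylog_double_integral_unit_square
    (p q a b : ℂ) (hp : 0 < p.re) (hq : 0 < q.re) (ha : 0 < a.re) (hb : 0 < b.re) :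
    ∀ z : ℂ, ‖z‖ < 1 →
      genPolylogC p q a b z =
        ((1 + a) ^ p * (1 + b) ^ q / (Complex.Gamma p * Complex.Gamma q)) *
          ∫ u in Set.Ioo (0 : ℝ) 1, ∫ v in Set.Ioo (0 : ℝ) 1,
            z * ((Real.log (1 / u) : ℂ) ^ (p - 1)) * ((Real.log (1 / v) : ℂ) ^ (q - 1)) *
              (u : ℂ) ^ a * (v : ℂ) ^ b / (1 - (u : ℂ) * (v : ℂ) * z) := by
  intro z hz
  have ha' : -1 < a.re := by linarith
  have hb' : -1 < b.re := by linarith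
  have hinner : ∀ u ∈ Ioo (0 : ℝ) 1,
      ∫ v in Ioo (0 : ℝ) 1, z * ((Real.log (1 / u) : ℂ) ^ (p - 1)) *
          ((Real.log (1 / v) : ℂ) ^ (q - 1)) * (u : ℂ) ^ a * (v : ℂ) ^ b /
            (1 - (u : ℂ) * (v : ℂ) * z) =
        z * ((u : ℂ) ^ a * (Real.log (1 / u) : ℂ) ^ (p - 1) *
          ∑' k : ℕ, z ^ k * ((1 / (b + k + 1)) ^ q * Gamma q) * (u : ℂ) ^ k) := fun u hu => by
    rw [setIntegral_congr_fun measurableSet_Ioo fun (v : ℝ) _ => show _ =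
        z * ((u : ℂ) ^ a * (Real.log (1 / u) : ℂ) ^ (p - 1)) *
          ((v : ℂ) ^ b * (Real.log (1 / v) : ℂ) ^ (q - 1) / (1 - v * (u * z))) by ring,
      integral_const_mul, integral_cpow_mul_log_one_div_cpow_div_one_sub_mul hb' hq
        (norm_ofReal_mul_lt_one hu hz), mul_assoc]
    congr 2
    exact tsum_congr fun k => by ring
  rw [setIntegral_congr_fun measurableSet_Ioo hinner, integral_const_mul,
    integral_cpow_mul_log_one_div_cpow_mul_tsum ha' hp
      (summable_norm_pow_mul_one_div_cpow_mul_Gamma hb' hq hz),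
    genPolylogC_eq_mul_tsum_one_div_cpow_mul_Gamma hp hq ha hb]
end

section
/- Let a be a real number with a > 0 and let s be a complex number with Re(s) > 0. Then for every complex z with |z| < 1, Σ_{n=0}^∞ z^n/(n+a)^s = 1/a^s + (z/Γ(s)) ∫_0^1 (log(1/t))^{s−1} t^a/(1−zt) dt. -/
/-!
For `x > 0` the geometric series gives `z e^{-(a+1)x} / (1 - z e^{-x}) = ∑_{n ≥ 1} z^n e^{-(n+a)x}`,
and Mellin-transforming term by term (legitimate by absolute convergence) turns this into
`Γ(s) ∑_{n ≥ 1} z^n / (n+a)^s`. The substitution `t = e^{-x}` rewrites that Mellin transform as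
`z ∫_0^1 (log (1/t))^{s-1} t^a / (1 - z t) dt`, and the `n = 0` term is `1 / a^s`.
-/

open MeasureTheory Set Real

lemma image_exp_neg_Ioi_zero : (fun x : ℝ ↦ rexp (-x)) '' Ioi 0 = Ioo 0 1 := by
  change (exp ∘ Neg.neg) '' _ = _
  rw [image_comp, image_neg_Ioi, neg_zero, image_exp_Iio, exp_zero]

theorem integral_comp_exp_neg_Ioi {E : Type*} [NormedAddCommGroup E] [NormedSpace ℝ E]
    (g : ℝ → E) : ∫ x in Ioi 0, rexp (-x) • g (rexp (-x)) = ∫ t in Ioo 0 1, g t := by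
  rw [← image_exp_neg_Ioi_zero]
  simpa [abs_of_pos (exp_pos _)] using (integral_image_eq_integral_abs_deriv_smul
    measurableSet_Ioi (fun x _ ↦ (hasDerivAt_neg x).exp.hasDerivWithinAt)
    (fun x _ y _ hxy ↦ neg_injective (exp_injective hxy)) g).symm

theorem mellin_comp_exp_neg {E : Type*} [NormedAddCommGroup E] [NormedSpace ℂ E]
    (G : ℝ → E) (s : ℂ) :
    mellin (fun x ↦ rexp (-x) • G (rexp (-x))) s =
      ∫ t in Ioo 0 1, ((log (1 / t) : ℝ) : ℂ) ^ (s - 1) • G t := by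
  rw [mellin, ← integral_comp_exp_neg_Ioi]
  refine setIntegral_congr_fun measurableSet_Ioi fun x _ ↦ ?_
  rw [one_div, ← exp_neg, neg_neg, log_exp, smul_comm]

lemma hasSum_pow_succ_mul_exp_neg {z : ℂ} (hz : ‖z‖ < 1) (a : ℝ) {x : ℝ} (hx : 0 < x) :
    HasSum (fun n : ℕ ↦ z ^ (n + 1) * rexp (-((n + 1 : ℕ) + a) * x))
      (z • (rexp (-x) • (((rexp (-x) : ℝ) : ℂ) ^ (a : ℂ) / (1 - z * rexp (-x))))) := by
  have hq : ‖z * rexp (-x)‖ < 1 := by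
    rw [norm_mul, Complex.norm_real, norm_of_nonneg (exp_pos _).le]
    exact mul_lt_one_of_nonneg_of_lt_one_left (norm_nonneg z) hz (exp_le_one_iff.mpr (by linarith))
  have hvalue : z • (rexp (-x) • (((rexp (-x) : ℝ) : ℂ) ^ (a : ℂ) / (1 - z * rexp (-x)))) =
      z * rexp (-x) * rexp (-x * a) * (1 - z * rexp (-x))⁻¹ := by
    rw [← Complex.ofReal_cpow (exp_pos _).le, ← exp_mul, Complex.real_smul, smul_eq_mul]
    ring
  rw [hvalue]
  refine ((hasSum_geometric_of_norm_lt_one hq).mul_left _).congr_fun fun n ↦ ?_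
  have hexp : rexp (-((n + 1 : ℕ) + a) * x) = rexp (-x) * rexp (-x * a) * rexp (-x) ^ n := by
    rw [← exp_nat_mul, ← exp_add, ← exp_add]
    push_cast
    ring_nf
  rw [hexp]
  push_cast
  ring

lemma summable_norm_pow_succ_div_rpow {z : ℂ} (hz : ‖z‖ < 1) {a σ : ℝ} (ha : 0 ≤ a)
    (hσ : 0 ≤ σ) : Summable fun n : ℕ ↦ ‖z ^ (n + 1)‖ / (((n + 1 : ℕ) : ℝ) + a) ^ σ := by
  refine ((summable_geometric_of_lt_one (norm_nonneg z) hz).mul_left ‖z‖).of_nonneg_of_le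
    (fun n ↦ by positivity) fun n ↦ ?_
  rw [norm_pow, ← pow_succ']
  exact div_le_self (by positivity)
    (one_le_rpow (by push_cast; linarith [n.cast_nonneg (α := ℝ)]) hσ)

theorem hasSum_pow_succ_div_cpow_eq_integral {a : ℝ} (ha : 0 ≤ a) {s : ℂ} (hs : 0 < s.re)
    {z : ℂ} (hz : ‖z‖ < 1) :
    HasSum (fun n : ℕ ↦ z ^ (n + 1) / ((((n + 1 : ℕ) : ℝ) + a : ℝ) : ℂ) ^ s)
      ((z / Complex.Gamma s) * ∫ t in Ioo (0 : ℝ) 1,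
        ((log (1 / t) : ℂ)) ^ (s - 1) * (t : ℂ) ^ (a : ℂ) / (1 - z * (t : ℂ))) := by
  have hΓ : Complex.Gamma s ≠ 0 := Complex.Gamma_ne_zero_of_re_pos hs
  have hmellin := hasSum_mellin (fun n ↦ Or.inr (by positivity)) hs
    (fun x hx ↦ hasSum_pow_succ_mul_exp_neg hz a hx) (summable_norm_pow_succ_div_rpow hz ha hs.le)
  rw [mellin_const_smul, mellin_comp_exp_neg (fun t : ℝ ↦ (t : ℂ) ^ (a : ℂ) / (1 - z * t))]
    at hmellin
  simp_rw [smul_eq_mul, ← mul_div_assoc] at hmellin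
  rw [div_mul_eq_mul_div]
  exact (hmellin.div_const _).congr_fun fun n ↦ by field_simp

theorem lerch_transcendent_basic_integral_representation
    (a : ℝ) (ha : 0 < a) (s : ℂ) (hs : 0 < s.re) :
    ∀ z : ℂ, ‖z‖ < 1 →
      ∑' n : ℕ, z ^ n / (((n : ℝ) + a : ℝ) : ℂ) ^ s =
        1 / ((a : ℂ) ^ s) +
          (z / Complex.Gamma s) *
            ∫ t in Set.Ioo (0 : ℝ) 1,
              ((Real.log (1 / t) : ℂ)) ^ (s - 1) * (t : ℂ) ^ (a : ℂ) / (1 - z * (t : ℂ)) := by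
  intro z hz
  have hsum := (hasSum_pow_succ_div_cpow_eq_integral ha.le hs hz).zero_add
    (f := fun n : ℕ ↦ z ^ n / (((n : ℝ) + a : ℝ) : ℂ) ^ s)
  rw [hsum.tsum_eq]
  simp
end
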